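/- arXiv:2304.14363 — 5 statements merged into one kernel-verified Lean document; each statement's English description precedes it below -/
import Mathlib

section
/- Let n ≥ 1, p ∈ (0,∞), and let K ⊂ ℝⁿ be a convex body. Then the L^p-polar body K^{∘,p} is bounded if and only if 0 lies in the interior of K. -/
open MeasureTheory
open scoped RealInnerProductSpace Pointwise ENNReal

noncomputable section

/-- The `L^p`-support function. -/
def hpSupp (n : ℕ) (p : ℝ) (K : Set (EuclideanSpace ℝ (Fin n)))
    (y : EuclideanSpace ℝ (Fin n)) : ℝ :=
  (1 / p) * Real.log ((∫ x in K, Real.exp (p * ⟪x, y⟫)) / (volume K).toReal)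

/-- The `L^p`-polar body. -/
def lpPolar (n : ℕ) (p : ℝ) (K : Set (EuclideanSpace ℝ (Fin n))) :
    Set (EuclideanSpace ℝ (Fin n)) :=
  {y | ((n - 1).factorial : ℝ≥0∞) ≤
    ∫⁻ r in Set.Ioi (0 : ℝ), ENNReal.ofReal (r ^ (n - 1) * Real.exp (-(hpSupp n p K (r • y))))}

/-- The `L^p`-Mahler volume, with values in `[0,∞]`. -/
def mahlerVolE (n : ℕ) (p : ℝ) (K : Set (EuclideanSpace ℝ (Fin n))) : ℝ≥0∞ :=
  volume K * ∫⁻ y, ENNReal.ofReal (Real.exp (-(hpSupp n p K y)))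

/-- The `L^p`-Mahler volume, real-valued. -/
def mahlerVol (n : ℕ) (p : ℝ) (K : Set (EuclideanSpace ℝ (Fin n))) : ℝ :=
  (volume K).toReal * ∫ y, Real.exp (-(hpSupp n p K y))

/-- Translate `K - x`. -/
def transl (n : ℕ) (K : Set (EuclideanSpace ℝ (Fin n))) (x : EuclideanSpace ℝ (Fin n)) :
    Set (EuclideanSpace ℝ (Fin n)) :=
  (fun z => z - x) '' K

/-- Barycenter `b(f)` of the measure `e^{-f}dx`. -/
def baryFn (n : ℕ) (f : EuclideanSpace ℝ (Fin n) → ℝ) : EuclideanSpace ℝ (Fin n) :=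
  (∫ y, Real.exp (-(f y)))⁻¹ • ∫ y, Real.exp (-(f y)) • y

/-- Barycenter of a body. -/
def baryK (n : ℕ) (K : Set (EuclideanSpace ℝ (Fin n))) : EuclideanSpace ℝ (Fin n) :=
  (volume K).toReal⁻¹ • ∫ x in K, x

/-- Support function. -/
def suppFn (n : ℕ) (K : Set (EuclideanSpace ℝ (Fin n))) (y : EuclideanSpace ℝ (Fin n)) : ℝ :=
  sSup ((fun x => ⟪x, y⟫) '' K)

/-- Polar body. -/
def polarBody (n : ℕ) (K : Set (EuclideanSpace ℝ (Fin n))) : Set (EuclideanSpace ℝ (Fin n)) :=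
  {y | ∀ x ∈ K, ⟪x, y⟫ ≤ 1}

/-- Mahler volume `n!·|K|·|K°|`. -/
def mahlerM (n : ℕ) (K : Set (EuclideanSpace ℝ (Fin n))) : ℝ :=
  (n.factorial : ℝ) * (volume K).toReal * (volume (polarBody n K)).toReal

/-- det of Hessian. -/
def hessDet (n : ℕ) (f : EuclideanSpace ℝ (Fin n) → ℝ) (y : EuclideanSpace ℝ (Fin n)) : ℝ :=
  (Matrix.of fun i j : Fin n =>
    iteratedFDeriv ℝ 2 f y ![EuclideanSpace.single i 1, EuclideanSpace.single j 1]).det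

/-- Covariance matrix. -/
def covMatrix (n : ℕ) (K : Set (EuclideanSpace ℝ (Fin n))) : Matrix (Fin n) (Fin n) ℝ :=
  Matrix.of fun i j =>
    (∫ x in K, x i * x j) / (volume K).toReal -
      ((∫ x in K, x i) / (volume K).toReal) * ((∫ x in K, x j) / (volume K).toReal)

/-- The functional `C(K) = |K|²/det Cov(K)`. -/
def isoC (n : ℕ) (K : Set (EuclideanSpace ℝ (Fin n))) : ℝ :=
  (volume K).toReal ^ 2 / (covMatrix n K).det

/-- `L^p` gauge, real-valued with the convention `∞ ↦ 0`. -/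
def lpGauge (n : ℕ) (p : ℝ) (K : Set (EuclideanSpace ℝ (Fin n)))
    (y : EuclideanSpace ℝ (Fin n)) : ℝ :=
  ((∫⁻ r in Set.Ioi (0 : ℝ),
      ENNReal.ofReal (r ^ (n - 1) * Real.exp (-(hpSupp n p K (r • y))))).toReal /
    (n - 1).factorial) ^ (-(1 / (n : ℝ)))

/-- Steiner symmetral. -/
def steiner (n : ℕ) (u : EuclideanSpace ℝ (Fin n)) (K : Set (EuclideanSpace ℝ (Fin n))) :
    Set (EuclideanSpace ℝ (Fin n)) :=
  {z | ∃ x ∈ (fun y => y - ⟪y, u⟫ • u) '' K, ∃ t : ℝ,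
    |t| ≤ (volume {s : ℝ | x + s • u ∈ K}).toReal / 2 ∧ z = x + t • u}


variable {n : ℕ}

lemma exp_inner_integrableOn {K : Set (EuclideanSpace ℝ (Fin n))} (hKc : IsCompact K)
    (s : EuclideanSpace ℝ (Fin n)) (p : ℝ) :
    IntegrableOn (fun x : EuclideanSpace ℝ (Fin n) => Real.exp (p * ⟪x, s⟫)) K := by
  apply ContinuousOn.integrableOn_compact hKc
  exact (Real.continuous_exp.comp
    (continuous_const.mul (continuous_id.inner continuous_const))).continuousOn

lemma integral_exp_lower (p ε : ℝ) (hp : 0 < p) (hε : 0 < ε)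
    {K : Set (EuclideanSpace ℝ (Fin n))} (hKc : IsCompact K)
    (hball : Metric.closedBall (0 : EuclideanSpace ℝ (Fin n)) ε ⊆ K)
    {s : EuclideanSpace ℝ (Fin n)} (hs : s ≠ 0) :
    (volume (Metric.closedBall (0 : EuclideanSpace ℝ (Fin n)) (ε/4))).toReal *
        Real.exp (p * (ε/2 * ‖s‖)) ≤ ∫ x in K, Real.exp (p * ⟪x, s⟫) := by
  have hns : (0:ℝ) < ‖s‖ := norm_pos_iff.2 hs
  set x0 : EuclideanSpace ℝ (Fin n) := ((3*ε/4) / ‖s‖) • s with hx0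
  have hx0n : ‖x0‖ = 3*ε/4 := by
    rw [hx0, norm_smul, Real.norm_eq_abs, abs_div, abs_of_nonneg (by linarith : (0:ℝ) ≤ 3*ε/4),
      abs_of_nonneg hns.le, div_mul_cancel₀ _ hns.ne']
  have hx0i : ⟪x0, s⟫ = 3*ε/4 * ‖s‖ := by
    rw [hx0, real_inner_smul_left, real_inner_self_eq_norm_mul_norm]
    field_simp
  have hsub : Metric.closedBall x0 (ε/4) ⊆ K := by
    refine subset_trans (fun z hz => ?_) hball
    simp only [Metric.mem_closedBall, dist_eq_norm] at hz ⊢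
    have : ‖z - 0‖ ≤ ‖z - x0‖ + ‖x0‖ := by
      have := norm_add_le (z - x0) x0
      simpa using this
    rw [hx0n] at this
    linarith
  have hpt : ∀ x ∈ Metric.closedBall x0 (ε/4),
      Real.exp (p * (ε/2 * ‖s‖)) ≤ Real.exp (p * ⟪x, s⟫) := by
    intro x hx
    have hd : ‖x - x0‖ ≤ ε/4 := by
      simpa [Metric.mem_closedBall, dist_eq_norm] using hx
    have h1 : |⟪x - x0, s⟫| ≤ ‖x - x0‖ * ‖s‖ := abs_real_inner_le_norm _ _
    have h2 : ⟪x - x0, s⟫ = ⟪x, s⟫ - ⟪x0, s⟫ := inner_sub_left _ _ _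
    have h3 : -(ε/4 * ‖s‖) ≤ ⟪x - x0, s⟫ := by
      have := neg_abs_le ⟪x - x0, s⟫
      nlinarith
    have h4 : ε/2 * ‖s‖ ≤ ⟪x, s⟫ := by rw [h2] at h3; rw [hx0i] at h3; nlinarith
    exact Real.exp_le_exp.2 (by nlinarith)
  have hint : IntegrableOn (fun x : EuclideanSpace ℝ (Fin n) => Real.exp (p * ⟪x, s⟫)) K :=
    exp_inner_integrableOn hKc s p
  calc (volume (Metric.closedBall (0 : EuclideanSpace ℝ (Fin n)) (ε/4))).toReal *
        Real.exp (p * (ε/2 * ‖s‖))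
      = Real.exp (p * (ε/2 * ‖s‖)) *
          (volume (Metric.closedBall x0 (ε/4))).toReal := by
        rw [Measure.addHaar_closedBall_center volume x0]; ring
    _ ≤ ∫ x in Metric.closedBall x0 (ε/4), Real.exp (p * ⟪x, s⟫) :=
        setIntegral_ge_of_const_le_real measurableSet_closedBall
          (measure_closedBall_lt_top).ne hpt (hint.mono_set hsub)
    _ ≤ ∫ x in K, Real.exp (p * ⟪x, s⟫) :=
        setIntegral_mono_set hint
          (Filter.Eventually.of_forall fun x => (Real.exp_pos _).le) hsub.eventuallyLE

-- nonpositivity of hpSupp in separating directions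
lemma hpSupp_nonpos (p : ℝ) (hp : 0 < p) {K : Set (EuclideanSpace ℝ (Fin n))}
    (hKc : IsCompact K) (hK0 : 0 < (volume K).toReal)
    {s : EuclideanSpace ℝ (Fin n)} (hs : ∀ x ∈ K, ⟪x, s⟫ ≤ 0) :
    hpSupp n p K s ≤ 0 := by
  have hI0 : 0 ≤ ∫ x in K, Real.exp (p * ⟪x, s⟫) :=
    setIntegral_nonneg hKc.measurableSet fun x _ => (Real.exp_pos _).le
  have hIle : (∫ x in K, Real.exp (p * ⟪x, s⟫)) ≤ (volume K).toReal := by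
    have : (∫ x in K, Real.exp (p * ⟪x, s⟫)) ≤ ∫ _x in K, (1:ℝ) :=
      setIntegral_mono_on (exp_inner_integrableOn hKc s p)
        (integrableOn_const hKc.measure_lt_top.ne) hKc.measurableSet
        (fun x hx => by
          have : p * ⟪x, s⟫ ≤ 0 := mul_nonpos_of_nonneg_of_nonpos hp.le (hs x hx)
          simpa using Real.exp_le_one_iff.2 this)
    simpa [Measure.real] using this
  have : Real.log ((∫ x in K, Real.exp (p * ⟪x, s⟫)) / (volume K).toReal) ≤ 0 :=
    Real.log_nonpos (div_nonneg hI0 hK0.le) ((div_le_one hK0).2 hIle)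
  exact mul_nonpos_of_nonneg_of_nonpos (by positivity) this

lemma mem_lpPolar_of_sep (p : ℝ) (hp : 0 < p) {K : Set (EuclideanSpace ℝ (Fin n))}
    (hKc : IsCompact K) (hK0 : 0 < (volume K).toReal)
    {y : EuclideanSpace ℝ (Fin n)} (hy : ∀ x ∈ K, ⟪x, y⟫ ≤ 0) :
    y ∈ lpPolar n p K := by
  have key : (⊤ : ℝ≥0∞) ≤
      ∫⁻ r in Set.Ioi (0 : ℝ), ENNReal.ofReal (r ^ (n - 1) * Real.exp (-(hpSupp n p K (r • y)))) := by
    have h1 : volume (Set.Ioi (1:ℝ)) ≤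
        ∫⁻ r in Set.Ioi (1 : ℝ), ENNReal.ofReal (r ^ (n - 1) * Real.exp (-(hpSupp n p K (r • y)))) := by
      rw [← setLIntegral_one]
      refine lintegral_mono_ae ((ae_restrict_iff' measurableSet_Ioi).2
        (Filter.Eventually.of_forall fun r hr => ?_))
      have hr1 : (1:ℝ) ≤ r := le_of_lt hr
      have hsep : ∀ x ∈ K, ⟪x, r • y⟫ ≤ 0 := fun x hx => by
        rw [real_inner_smul_right]
        exact mul_nonpos_of_nonneg_of_nonpos (by linarith) (hy x hx)
      have hh : hpSupp n p K (r • y) ≤ 0 := hpSupp_nonpos p hp hKc hK0 hsep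
      have : (1:ℝ) ≤ r ^ (n - 1) * Real.exp (-(hpSupp n p K (r • y))) := by
        have h2 : (1:ℝ) ≤ r ^ (n-1) := one_le_pow₀ hr1
        have h3 : (1:ℝ) ≤ Real.exp (-(hpSupp n p K (r • y))) :=
          Real.one_le_exp (by linarith)
        nlinarith
      simpa using ENNReal.one_le_ofReal.2 this
    rw [Real.volume_Ioi] at h1
    exact le_trans (le_trans le_top h1)
      (lintegral_mono_set (Set.Ioi_subset_Ioi (by norm_num)))
  exact le_trans le_top key

-- upper bound of the polar integral when 0 ∈ int K
lemma lpPolar_subset_closedBall (hn : 1 ≤ n) (p : ℝ) (hp : 0 < p)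
    {K : Set (EuclideanSpace ℝ (Fin n))} (hKc : IsCompact K)
    {ε : ℝ} (hε : 0 < ε) (hball : Metric.closedBall (0 : EuclideanSpace ℝ (Fin n)) ε ⊆ K) :
    ∃ R : ℝ, lpPolar n p K ⊆ Metric.closedBall 0 R := by
  set vK : ℝ := (volume K).toReal with hvKdef
  set V : ℝ := (volume (Metric.closedBall (0 : EuclideanSpace ℝ (Fin n)) (ε/4))).toReal with hVdef
  have hvK : 0 < vK := ENNReal.toReal_pos
    (ne_of_gt (lt_of_lt_of_le (Metric.measure_closedBall_pos volume _ hε) (measure_mono hball)))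
    hKc.measure_lt_top.ne
  have hV : 0 < V := ENNReal.toReal_pos
    (ne_of_gt (Metric.measure_closedBall_pos volume _ (by linarith))) measure_closedBall_lt_top.ne
  set M : ℝ := Real.exp ((1/p) * (Real.log vK - Real.log V)) with hMdef
  have hM : 0 < M := Real.exp_pos _
  -- pointwise exponential bound
  have hbound : ∀ s : EuclideanSpace ℝ (Fin n), s ≠ 0 →
      Real.exp (-(hpSupp n p K s)) ≤ M * Real.exp (-(ε/2 * ‖s‖)) := by
    intro s hs
    have hlow := integral_exp_lower p ε hp hε hKc hball hs
    set I : ℝ := ∫ x in K, Real.exp (p * ⟪x, s⟫) with hIdef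
    have hIpos : 0 < I := lt_of_lt_of_le (by positivity) hlow
    have hlog : Real.log V + p * (ε/2 * ‖s‖) ≤ Real.log I := by
      have h1 : Real.log (V * Real.exp (p * (ε/2 * ‖s‖))) ≤ Real.log I :=
        Real.log_le_log (by positivity) hlow
      rwa [Real.log_mul hV.ne' (Real.exp_pos _).ne', Real.log_exp] at h1
    have hh : (1/p) * (Real.log V - Real.log vK) + ε/2 * ‖s‖ ≤ hpSupp n p K s := by
      unfold hpSupp
      rw [Real.log_div hIpos.ne' hvK.ne']
      have : Real.log V - Real.log vK + p * (ε/2 * ‖s‖) ≤ Real.log I - Real.log vK := by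
        linarith
      calc (1/p) * (Real.log V - Real.log vK) + ε/2 * ‖s‖
          = (1/p) * ((Real.log V - Real.log vK) + p * (ε/2 * ‖s‖)) := by field_simp
        _ ≤ (1/p) * (Real.log I - Real.log vK) := by
            apply mul_le_mul_of_nonneg_left _ (by positivity)
            linarith
    have : -(hpSupp n p K s) ≤ (1/p) * (Real.log vK - Real.log V) + -(ε/2 * ‖s‖) := by
      have := hh; ring_nf at this ⊢; linarith
    calc Real.exp (-(hpSupp n p K s)) ≤
        Real.exp ((1/p) * (Real.log vK - Real.log V) + -(ε/2 * ‖s‖)) := Real.exp_le_exp.2 this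
      _ = M * Real.exp (-(ε/2 * ‖s‖)) := by rw [hMdef, ← Real.exp_add]
  refine ⟨2/ε * (M + 1), fun y hy => ?_⟩
  by_contra hyR
  rw [Metric.mem_closedBall, dist_zero_right, not_le] at hyR
  have hy0 : y ≠ 0 := by
    intro h; rw [h, norm_zero] at hyR
    have : 0 < 2/ε * (M+1) := by positivity
    linarith
  set b : ℝ := ε/2 * ‖y‖ with hbdef
  have hbM : M + 1 < b := by
    have h2 : 0 < ε/2 := by linarith
    calc M + 1 = ε/2 * (2/ε * (M+1)) := by field_simp
      _ < ε/2 * ‖y‖ := by exact mul_lt_mul_of_pos_left hyR h2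
  have hb1 : 1 < b := by linarith
  have hb : 0 < b := by linarith
  -- integrability of the dominating function
  have hint : IntegrableOn (fun r : ℝ => r ^ (n-1) * Real.exp (-(b * r))) (Set.Ioi 0) := by
    have h0 := integrableOn_rpow_mul_exp_neg_mul_rpow
      (s := (n:ℝ) - 1) (p := 1) (b := b) (by
        have : (1:ℝ) ≤ (n:ℝ) := by exact_mod_cast hn
        linarith) one_pos hb
    refine h0.congr_fun (fun x hx => ?_) measurableSet_Ioi
    have hx0 : (0:ℝ) < x := hx
    simp only [Real.rpow_one]
    rw [show (n:ℝ) - 1 = ((n - 1 : ℕ) : ℝ) by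
      rw [Nat.cast_sub hn]; norm_num]
    rw [Real.rpow_natCast]
    ring_nf
  have hG : IntegrableOn (fun r : ℝ => M * (r ^ (n-1) * Real.exp (-(b * r)))) (Set.Ioi 0) :=
    hint.const_mul M
  -- step 1: compare lintegrals
  have hstep1 : (∫⁻ r in Set.Ioi (0:ℝ),
      ENNReal.ofReal (r ^ (n - 1) * Real.exp (-(hpSupp n p K (r • y))))) ≤
      ∫⁻ r in Set.Ioi (0:ℝ), ENNReal.ofReal (M * (r ^ (n-1) * Real.exp (-(b * r)))) := by
    refine lintegral_mono_ae ((ae_restrict_iff' measurableSet_Ioi).2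
      (Filter.Eventually.of_forall fun r hr => ?_))
    have hr0 : (0:ℝ) < r := hr
    have hry : r • y ≠ 0 := smul_ne_zero hr0.ne' hy0
    have hnorm : ‖r • y‖ = r * ‖y‖ := by rw [norm_smul, Real.norm_eq_abs, abs_of_pos hr0]
    have := hbound (r • y) hry
    rw [hnorm] at this
    apply ENNReal.ofReal_le_ofReal
    have hb' : ε/2 * (r * ‖y‖) = b * r := by rw [hbdef]; ring
    rw [hb'] at this
    have hrn : (0:ℝ) ≤ r ^ (n-1) := by positivity
    calc r ^ (n-1) * Real.exp (-(hpSupp n p K (r • y)))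
        ≤ r ^ (n-1) * (M * Real.exp (-(b * r))) := by
          exact mul_le_mul_of_nonneg_left this hrn
      _ = M * (r ^ (n-1) * Real.exp (-(b * r))) := by ring
  -- step 2: compute the dominating integral
  have hval : (∫ r in Set.Ioi (0:ℝ), M * (r ^ (n-1) * Real.exp (-(b * r)))) =
      M * ((1/b) ^ n * ((n-1).factorial : ℝ)) := by
    rw [integral_const_mul]
    congr 1
    have hconv : (∫ r in Set.Ioi (0:ℝ), r ^ (n-1) * Real.exp (-(b * r))) =
        ∫ r in Set.Ioi (0:ℝ), r ^ ((n:ℝ) - 1) * Real.exp (-(b * r)) := by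
      refine setIntegral_congr_fun measurableSet_Ioi (fun x hx => ?_)
      have hx0 : (0:ℝ) < x := hx
      rw [show (n:ℝ) - 1 = ((n - 1 : ℕ) : ℝ) by rw [Nat.cast_sub hn]; norm_num,
        Real.rpow_natCast]
    rw [hconv, Real.integral_rpow_mul_exp_neg_mul_Ioi (by exact_mod_cast hn : (0:ℝ) < (n:ℝ)) hb]
    have hgamma : Real.Gamma (n:ℝ) = ((n-1).factorial : ℝ) := by
      have h' : n - 1 + 1 = n := Nat.succ_pred_eq_of_pos hn
      rw [show (n:ℝ) = ((n - 1 : ℕ) : ℝ) + 1 by rw [← h']; push_cast; ring]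
      exact Real.Gamma_nat_eq_factorial (n-1)
    rw [hgamma]
    congr 1
    rw [← Real.rpow_natCast (1/b) n]
  -- step 3: turn into ofReal
  have hstep2 : (∫⁻ r in Set.Ioi (0:ℝ), ENNReal.ofReal (M * (r ^ (n-1) * Real.exp (-(b * r))))) =
      ENNReal.ofReal (M * ((1/b) ^ n * ((n-1).factorial : ℝ))) := by
    rw [← hval, ← ofReal_integral_eq_lintegral_ofReal hG
      ((ae_restrict_iff' measurableSet_Ioi).2 (Filter.Eventually.of_forall fun r hr => by
        have : (0:ℝ) < r := hr
        positivity))]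
  -- step 4: strict inequality
  have hlt : ENNReal.ofReal (M * ((1/b) ^ n * ((n-1).factorial : ℝ))) <
      (((n-1).factorial : ℕ) : ℝ≥0∞) := by
    rw [← ENNReal.ofReal_natCast]
    refine (ENNReal.ofReal_lt_ofReal_iff (by positivity)).2 ?_
    have hbn : M < b ^ n := lt_of_lt_of_le (by linarith)
      (le_self_pow₀ hb1.le (by omega : n ≠ 0))
    have hF : (0:ℝ) < ((n-1).factorial : ℝ) := by
      exact_mod_cast Nat.factorial_pos (n-1)
    have h1 : M * (1/b) ^ n < 1 := by
      rw [one_div_pow, mul_one_div]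
      exact (div_lt_one (by positivity)).2 hbn
    calc M * ((1/b)^n * ((n-1).factorial : ℝ)) = (M * (1/b)^n) * ((n-1).factorial : ℝ) := by ring
      _ < 1 * ((n-1).factorial : ℝ) := mul_lt_mul_of_pos_right h1 hF
      _ = ((n-1).factorial : ℝ) := one_mul _
  have := hy
  rw [lpPolar, Set.mem_setOf_eq] at this
  have hcontr := lt_of_le_of_lt (le_trans this (le_trans hstep1 (le_of_eq hstep2))) hlt
  exact absurd hcontr (lt_irrefl _)


/-- For `n ≥ 1`, `p ∈ (0,∞)` and a convex body `K ⊂ ℝⁿ`, the `L^p`-polar body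
`K^{∘,p}` is bounded if and only if `0 ∈ int K`. -/
theorem lpPolar_isBounded_iff (n : ℕ) (hn : 1 ≤ n) (p : ℝ) (hp : 0 < p)
    (K : Set (EuclideanSpace ℝ (Fin n))) (hKc : IsCompact K) (hKconv : Convex ℝ K)
    (hKint : (interior K).Nonempty) :
    Bornology.IsBounded (lpPolar n p K) ↔ (0 : EuclideanSpace ℝ (Fin n)) ∈ interior K := by
  have hvK : 0 < (volume K).toReal :=
    ENNReal.toReal_pos
      (ne_of_gt ((isOpen_interior.measure_pos volume hKint).trans_le
        (measure_mono interior_subset))) hKc.measure_lt_top.ne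
  constructor
  · intro hB
    by_contra h0
    obtain ⟨f, hf⟩ := geometric_hahn_banach_open_point hKconv.interior isOpen_interior h0
    obtain ⟨z, hz⟩ := hKint
    have hfz : f z < 0 := by simpa using hf z hz
    set u := (InnerProductSpace.toDual ℝ (EuclideanSpace ℝ (Fin n))).symm f with hudef
    have hu : ∀ x, ⟪u, x⟫ = f x := fun x => InnerProductSpace.toDual_symm_apply
    have hu0 : u ≠ 0 := by
      intro h
      have h2 := hu z
      rw [h, inner_zero_left] at h2
      linarith
    have hKle : ∀ x ∈ K, f x ≤ 0 := by
      intro x hx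
      by_contra hpos
      push_neg at hpos
      have key : ∀ t : ℝ, t ∈ Set.Ioc (0:ℝ) 1 → f x + t * (f z - f x) < 0 := by
        intro t ht
        have hmem := hKconv.add_smul_sub_mem_interior hx hz ht
        have h3 := hf _ hmem
        have he : f (x + t • (z - x)) = f x + t * (f z - f x) := by
          simp [map_add, _root_.map_smul, map_sub, smul_eq_mul, mul_sub]
        rw [he, map_zero] at h3
        exact h3
      have hc : 0 < f x - f z := by linarith
      have h2 := key (f x / (2*(f x - f z)))
        ⟨by positivity, by rw [div_le_one (by positivity)]; linarith⟩
      have heq : f x + (f x / (2*(f x - f z))) * (f z - f x) = f x / 2 := by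
        field_simp
        ring
      rw [heq] at h2
      linarith
    have hmem : ∀ t : ℝ, 0 < t → t • u ∈ lpPolar n p K := by
      intro t ht
      apply mem_lpPolar_of_sep p hp hKc hvK
      intro x hx
      rw [real_inner_smul_right]
      have h4 : ⟪x, u⟫ = f x := by rw [real_inner_comm]; exact hu x
      rw [h4]
      exact mul_nonpos_of_nonneg_of_nonpos ht.le (hKle x hx)
    obtain ⟨C, hC⟩ := isBounded_iff_forall_norm_le.1 hB
    have hun : 0 < ‖u‖ := norm_pos_iff.2 hu0
    have ht : 0 < (|C|+1)/‖u‖ := by positivity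
    have h5 := hC _ (hmem _ ht)
    rw [norm_smul, Real.norm_eq_abs, abs_of_pos ht, div_mul_cancel₀ _ hun.ne'] at h5
    have := le_abs_self C
    linarith
  · intro h0
    have hnh : K ∈ nhds (0 : EuclideanSpace ℝ (Fin n)) := mem_interior_iff_mem_nhds.1 h0
    obtain ⟨ε, hε, hball⟩ := Metric.nhds_basis_closedBall.mem_iff.1 hnh
    obtain ⟨R, hR⟩ := lpPolar_subset_closedBall hn p hp hKc hε hball
    exact (Metric.isBounded_closedBall).subset hR

end
end

section
/- Let n ≥ 1, p ∈ (0,∞), and let K ⊂ ℝⁿ be a convex body whose barycenter b(K) is the origin. Then for every λ ∈ (0,1) and every y ∈ ℝⁿ, h_K(y) ≤ h_{p,K}(y/λ) − (n/p)·log(1−λ). -/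
open MeasureTheory
open scoped RealInnerProductSpace Pointwise ENNReal

noncomputable section

/-- Reverse inequality: if the barycenter of the convex body `K` is the origin,
then `h_K(y) ≤ h_{p,K}(y/λ) − (n/p)·log(1−λ)` for every `λ ∈ (0,1)` and `y ∈ ℝⁿ`. -/
theorem suppFn_le_hpSupp (n : ℕ) (hn : 1 ≤ n) (p : ℝ) (hp : 0 < p)
    (K : Set (EuclideanSpace ℝ (Fin n))) (hKc : IsCompact K) (hKconv : Convex ℝ K)
    (hKint : (interior K).Nonempty) (hb : baryK n K = 0)
    (l : ℝ) (hl : l ∈ Set.Ioo (0 : ℝ) 1) (y : EuclideanSpace ℝ (Fin n)) :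
    suppFn n K y ≤ hpSupp n p K (l⁻¹ • y) - ((n : ℝ) / p) * Real.log (1 - l) := by
  obtain ⟨hl0, hl1⟩ := hl
  have hl1' : (0 : ℝ) < 1 - l := by linarith
  have hlne : l ≠ 0 := ne_of_gt hl0
  have hK_ne : K.Nonempty := hKint.mono interior_subset
  have hμpos : 0 < volume K :=
    lt_of_lt_of_le (isOpen_interior.measure_pos volume hKint) (measure_mono interior_subset)
  have hμfin : volume K ≠ ⊤ := hKc.measure_lt_top.ne
  have hV : 0 < (volume K).toReal := ENNReal.toReal_pos hμpos.ne' hμfin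
  have hKm : MeasurableSet K := hKc.measurableSet
  have hcont : Continuous fun x : EuclideanSpace ℝ (Fin n) => ⟪x, y⟫ :=
    continuous_id.inner continuous_const
  -- maximizer of the linear functional on K
  obtain ⟨x₀, hx₀K, hx₀max⟩ := hKc.exists_isMaxOn hK_ne hcont.continuousOn
  set h : ℝ := ⟪x₀, y⟫ with hh
  have hsupp : suppFn n K y = h := by
    apply IsGreatest.csSup_eq
    exact ⟨⟨x₀, hx₀K, rfl⟩, by rintro _ ⟨x, hx, rfl⟩; exact hx₀max hx⟩
  -- barycenter is zero
  have hintId : IntegrableOn (fun x : (EuclideanSpace ℝ (Fin n)) => x) K := continuousOn_id.integrableOn_compact hKc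
  have hbary : (∫ x in K, x : (EuclideanSpace ℝ (Fin n))) = 0 := by
    unfold baryK at hb
    rcases smul_eq_zero.mp hb with h1 | h2
    · exact absurd h1 (by positivity)
    · exact h2
  have hinner0 : ∫ x in K, ⟪x, y⟫ = 0 := by
    have : ∀ x : (EuclideanSpace ℝ (Fin n)), ⟪x, y⟫ = ⟪y, x⟫ := fun x => (real_inner_comm x y).symm
    simp_rw [this]
    rw [integral_inner hintId, hbary, inner_zero_right]
  have hinnerInt : IntegrableOn (fun x : (EuclideanSpace ℝ (Fin n)) => ⟪x, y⟫) K :=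
    hcont.continuousOn.integrableOn_compact hKc
  -- Jensen-lite: ∫_K e^{c⟨x,y⟩} ≥ |K|
  have expInt : ∀ c : ℝ, IntegrableOn (fun x : (EuclideanSpace ℝ (Fin n)) => Real.exp (c * ⟪x, y⟫)) K := by
    intro c
    exact (Real.continuous_exp.comp (continuous_const.mul hcont)).continuousOn.integrableOn_compact hKc
  have key : ∀ c : ℝ, (volume K).toReal ≤ ∫ x in K, Real.exp (c * ⟪x, y⟫) := by
    intro c
    have h1 : ∫ x in K, (c * ⟪x, y⟫ + 1) = (volume K).toReal := by
      rw [integral_add (hinnerInt.const_mul c) (integrableOn_const hKc.measure_lt_top.ne)]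
      rw [MeasureTheory.integral_const_mul, hinner0, setIntegral_const]
      simp [Measure.real]
    have h2 : ∫ x in K, (c * ⟪x, y⟫ + 1) ≤ ∫ x in K, Real.exp (c * ⟪x, y⟫) := by
      refine integral_mono (((hinnerInt.const_mul c)).add
        (integrableOn_const hKc.measure_lt_top.ne)) (expInt c) ?_
      intro x
      exact Real.add_one_le_exp _
    linarith
  -- the homothety T
  set c : ℝ := l⁻¹ * (1 - l) with hcdef
  set T : (EuclideanSpace ℝ (Fin n)) → (EuclideanSpace ℝ (Fin n)) := fun z => l • x₀ + (1 - l) • z with hT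
  have hTK : T '' K ⊆ K := by
    rintro _ ⟨z, hz, rfl⟩
    exact hKconv hx₀K hz hl0.le hl1'.le (by ring)
  have hT' : ∀ z ∈ K, HasFDerivWithinAt T ((1 - l) • ContinuousLinearMap.id ℝ (EuclideanSpace ℝ (Fin n))) K z := by
    intro z hz
    exact (((hasFDerivAt_id z).const_smul (1 - l)).const_add (l • x₀)).hasFDerivWithinAt
  have hdet : ((1 - l) • ContinuousLinearMap.id ℝ (EuclideanSpace ℝ (Fin n))).det = (1 - l) ^ n := by
    rw [ContinuousLinearMap.det]
    simp [LinearMap.det_smul]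
  have hinj : Set.InjOn T K := by
    intro a _ b _ hab
    have h1 : (1 - l) • a = (1 - l) • b := by
      have := hab
      simp only [hT] at this
      exact add_left_cancel this
    exact smul_right_injective (EuclideanSpace ℝ (Fin n)) (ne_of_gt hl1') h1
  have hchg := MeasureTheory.integral_image_eq_integral_abs_det_fderiv_smul volume hKm
    (f' := fun _ => (1 - l) • ContinuousLinearMap.id ℝ (EuclideanSpace ℝ (Fin n))) hT' hinj
    (fun x => Real.exp (p * ⟪x, l⁻¹ • y⟫))
  -- compute the inner product under T
  have hinT : ∀ z : (EuclideanSpace ℝ (Fin n)), ⟪T z, l⁻¹ • y⟫ = h + c * ⟪z, y⟫ := by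
    intro z
    simp only [hT, inner_add_left, real_inner_smul_left, real_inner_smul_right, hcdef, hh]
    field_simp
  have hrw : ∀ z : (EuclideanSpace ℝ (Fin n)), |((1 - l) • ContinuousLinearMap.id ℝ (EuclideanSpace ℝ (Fin n))).det| •
      Real.exp (p * ⟪T z, l⁻¹ • y⟫)
      = (1 - l) ^ n * Real.exp (p * h) * Real.exp ((p * c) * ⟪z, y⟫) := by
    intro z
    rw [hdet, hinT, abs_of_pos (pow_pos hl1' n), smul_eq_mul, mul_add, Real.exp_add]
    ring
  have hlower : (1 - l) ^ n * Real.exp (p * h) * (volume K).toReal ≤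
      ∫ x in K, Real.exp (p * ⟪x, l⁻¹ • y⟫) := by
    have hTmeas : ∫ x in T '' K, Real.exp (p * ⟪x, l⁻¹ • y⟫) ∂volume
        = (1 - l) ^ n * Real.exp (p * h) * ∫ z in K, Real.exp ((p * c) * ⟪z, y⟫) := by
      rw [hchg]
      simp_rw [hrw]
      rw [MeasureTheory.integral_const_mul]
    have hmono : ∫ x in T '' K, Real.exp (p * ⟪x, l⁻¹ • y⟫) ∂volume
        ≤ ∫ x in K, Real.exp (p * ⟪x, l⁻¹ • y⟫) := by
      refine setIntegral_mono_set ?_ ?_ (HasSubset.Subset.eventuallyLE hTK)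
      · have : (fun x : (EuclideanSpace ℝ (Fin n)) => Real.exp (p * ⟪x, l⁻¹ • y⟫)) =
            fun x : (EuclideanSpace ℝ (Fin n)) => Real.exp (p * (l⁻¹ * ⟪x, y⟫)) := by
          funext x; rw [real_inner_smul_right]
        rw [this]
        simp_rw [← mul_assoc]
        exact expInt (p * l⁻¹)
      · filter_upwards with x using (Real.exp_pos _).le
    calc (1 - l) ^ n * Real.exp (p * h) * (volume K).toReal
        ≤ (1 - l) ^ n * Real.exp (p * h) * ∫ z in K, Real.exp ((p * c) * ⟪z, y⟫) := by
          apply mul_le_mul_of_nonneg_left (key (p * c)) (by positivity)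
      _ = ∫ x in T '' K, Real.exp (p * ⟪x, l⁻¹ • y⟫) ∂volume := hTmeas.symm
      _ ≤ _ := hmono
  -- conclude via logs
  set I : ℝ := ∫ x in K, Real.exp (p * ⟪x, l⁻¹ • y⟫) with hI
  have hprodpos : 0 < (1 - l) ^ n * Real.exp (p * h) := by positivity
  have hIV : (1 - l) ^ n * Real.exp (p * h) ≤ I / (volume K).toReal :=
    (le_div_iff₀ hV).mpr hlower
  have hlog : Real.log ((1 - l) ^ n * Real.exp (p * h)) ≤ Real.log (I / (volume K).toReal) :=
    Real.log_le_log hprodpos hIV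
  rw [Real.log_mul (by positivity) (Real.exp_ne_zero _), Real.log_pow, Real.log_exp] at hlog
  have hfinal : h ≤ (1 / p) * Real.log (I / (volume K).toReal) - ((n : ℝ) / p) * Real.log (1 - l) := by
    have e1 : h = (1 / p) * ((n : ℝ) * Real.log (1 - l) + p * h) - ((n : ℝ) / p) * Real.log (1 - l) := by
      field_simp
      ring
    rw [e1]
    have := mul_le_mul_of_nonneg_left hlog (by positivity : (0:ℝ) ≤ 1 / p)
    linarith
  rw [hsupp]
  exact hfinal

end
end

section
/- Let n ≥ 1 and let K ⊂ ℝⁿ be a convex body. Then for every y ∈ ℝⁿ: (a) for every q ∈ (0,∞), h_{p,K}(y) → h_{q,K}(y) as p → q; and (b) h_{p,K}(y) → h_K(y) as p → ∞, where the convergence in (b) is monotone increasing in p. -/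
open MeasureTheory
open scoped RealInnerProductSpace Pointwise ENNReal

noncomputable section

/-- For a convex body `K ⊂ ℝⁿ` and every `y`:
(a) `h_{p,K}(y) → h_{q,K}(y)` as `p → q` within `(0,∞)`, for every `q ∈ (0,∞)`;
(b) `p ↦ h_{p,K}(y)` is monotone increasing on `(0,∞)` and `h_{p,K}(y) → h_K(y)` as `p → ∞`. -/
theorem hpSupp_continuity_and_limit (n : ℕ) (hn : 1 ≤ n)
    (K : Set (EuclideanSpace ℝ (Fin n))) (hKc : IsCompact K) (hKconv : Convex ℝ K)
    (hKint : (interior K).Nonempty) (y : EuclideanSpace ℝ (Fin n)) :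
    (∀ q : ℝ, 0 < q →
      Filter.Tendsto (fun p => hpSupp n p K y) (nhdsWithin q (Set.Ioi 0))
        (nhds (hpSupp n q K y))) ∧
    (∀ p q : ℝ, 0 < p → p ≤ q → hpSupp n p K y ≤ hpSupp n q K y) ∧
    Filter.Tendsto (fun p => hpSupp n p K y) Filter.atTop (nhds (suppFn n K y)) := by
  classical
  have hf_cont : Continuous fun x : EuclideanSpace ℝ (Fin n) => (⟪x, y⟫ : ℝ) :=
    continuous_id.inner continuous_const
  have hKne : K.Nonempty := hKint.mono interior_subset
  have hKmeas : MeasurableSet K := hKc.isClosed.measurableSet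
  have hKfin : volume K < ⊤ := hKc.measure_lt_top
  have hKpos : 0 < volume K := Measure.measure_pos_of_nonempty_interior _ hKint
  set V : ℝ := (volume K).toReal with hV_def
  have hVpos : 0 < V := ENNReal.toReal_pos hKpos.ne' hKfin.ne
  obtain ⟨B, hBn⟩ := hKc.exists_bound_of_continuousOn hf_cont.continuousOn
  have hB : ∀ x ∈ K, |(⟪x, y⟫ : ℝ)| ≤ B := by
    intro x hx; simpa [Real.norm_eq_abs] using hBn x hx
  have hB0 : 0 ≤ B := by
    obtain ⟨x₀, hx₀⟩ := hKne
    exact le_trans (abs_nonneg _) (hB x₀ hx₀)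
  have hint : ∀ p : ℝ, IntegrableOn (fun x => Real.exp (p * ⟪x, y⟫)) K volume := fun p =>
    (Real.continuous_exp.comp (continuous_const.mul hf_cont)).continuousOn.integrableOn_compact hKc
  have hconst_int : ∀ c : ℝ, IntegrableOn (fun _ => c) K volume := fun c =>
    integrableOn_const hKfin.ne
  set F : ℝ → ℝ := fun p => ∫ x in K, Real.exp (p * ⟪x, y⟫) with hF_def
  have hhp : ∀ p : ℝ, hpSupp n p K y = (1 / p) * Real.log (F p / V) := fun p => rfl
  have hFlb : ∀ p : ℝ, V * Real.exp (-(|p| * B)) ≤ F p := by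
    intro p
    have hmono := setIntegral_mono_on (hconst_int (Real.exp (-(|p| * B)))) (hint p) hKmeas
      (fun x hx => by
        refine Real.exp_le_exp.2 ?_
        have h1 : |p * ⟪x, y⟫| ≤ |p| * B := by
          rw [abs_mul]
          exact mul_le_mul_of_nonneg_left (hB x hx) (abs_nonneg p)
        have := (abs_le.1 h1).1
        linarith)
    calc V * Real.exp (-(|p| * B)) = ∫ _ in K, Real.exp (-(|p| * B)) := by
          rw [setIntegral_const, smul_eq_mul, measureReal_def]
      _ ≤ F p := hmono
  have hFpos : ∀ p : ℝ, 0 < F p := fun p => lt_of_lt_of_le (by positivity) (hFlb p)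
  -- Part (b): monotonicity
  have key_mono : ∀ p q : ℝ, 0 < p → p ≤ q → hpSupp n p K y ≤ hpSupp n q K y := by
    intro p q hp hpq
    have hq : 0 < q := lt_of_lt_of_le hp hpq
    haveI : IsFiniteMeasure (volume.restrict K :
        Measure (EuclideanSpace ℝ (Fin n))) :=
      ⟨by rw [Measure.restrict_apply_univ]; exact hKfin⟩
    haveI : NeZero (volume.restrict K : Measure (EuclideanSpace ℝ (Fin n))) := by
      refine ⟨fun h => hKpos.ne' ?_⟩
      have := congrArg (fun μ : Measure (EuclideanSpace ℝ (Fin n)) => μ Set.univ) h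
      simpa [Measure.restrict_apply_univ] using this
    set r : ℝ := q / p with hr_def
    have hr : 1 ≤ r := (one_le_div hp).2 hpq
    have hexp : ∀ x : EuclideanSpace ℝ (Fin n),
        (Real.exp (p * ⟪x, y⟫)) ^ r = Real.exp (q * ⟪x, y⟫) := by
      intro x
      rw [← Real.exp_mul]
      congr 1
      rw [hr_def]
      field_simp [hp.ne']
    have hgc : ContinuousOn (fun t : ℝ => t ^ r) (Set.Ici 0) := fun t _ =>
      (Real.continuousAt_rpow_const t r (Or.inr (by linarith))).continuousWithinAt
    have hfs : ∀ᵐ x ∂(volume.restrict K), Real.exp (p * ⟪x, y⟫) ∈ Set.Ici (0 : ℝ) :=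
      Filter.Eventually.of_forall fun x => (Real.exp_pos _).le
    have hgi : Integrable ((fun t : ℝ => t ^ r) ∘ fun x => Real.exp (p * ⟪x, y⟫))
        (volume.restrict K) := by
      have heq : ((fun t : ℝ => t ^ r) ∘ fun x : EuclideanSpace ℝ (Fin n) =>
          Real.exp (p * ⟪x, y⟫)) = fun x => Real.exp (q * ⟪x, y⟫) :=
        funext fun x => hexp x
      rw [heq]; exact hint q
    have hJ := (convexOn_rpow hr).map_average_le hgc isClosed_Ici hfs (hint p) hgi
    simp only [hexp] at hJ
    have havg : ∀ s : ℝ,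
        (⨍ x, Real.exp (s * ⟪x, y⟫) ∂(volume.restrict K)) = F s / V := by
      intro s
      rw [average_eq, measureReal_def, Measure.restrict_apply_univ, smul_eq_mul, div_eq_inv_mul]
    rw [havg p, havg q] at hJ
    have hAp : 0 < F p / V := div_pos (hFpos p) hVpos
    have hAq : 0 < F q / V := div_pos (hFpos q) hVpos
    have hlog : r * Real.log (F p / V) ≤ Real.log (F q / V) := by
      calc r * Real.log (F p / V) = Real.log ((F p / V) ^ r) :=
            (Real.log_rpow hAp r).symm
        _ ≤ Real.log (F q / V) := Real.log_le_log (Real.rpow_pos_of_pos hAp r) hJ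
    rw [hhp p, hhp q]
    have heq2 : (1 / p) * Real.log (F p / V) = (1 / q) * (r * Real.log (F p / V)) := by
      rw [hr_def]; field_simp
    rw [heq2]
    exact mul_le_mul_of_nonneg_left hlog (by positivity)
  -- Part (a): continuity
  have key_cont : ∀ q : ℝ, 0 < q →
      Filter.Tendsto (fun p => hpSupp n p K y) (nhdsWithin q (Set.Ioi 0))
        (nhds (hpSupp n q K y)) := by
    intro q hq
    have hFcont : ContinuousAt F q := by
      apply MeasureTheory.continuousAt_of_dominated
        (bound := fun _ => Real.exp ((|q| + 1) * B))
      · exact Filter.Eventually.of_forall fun p =>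
          (Real.continuous_exp.comp (continuous_const.mul hf_cont)).aestronglyMeasurable
      · have habs : ∀ᶠ p in nhds q, |p| < |q| + 1 :=
          Filter.Tendsto.eventually_lt_const (by linarith) (continuous_abs.tendsto q)
        filter_upwards [habs] with p hpabs
        filter_upwards [self_mem_ae_restrict hKmeas] with x hx
        have h1 : p * ⟪x, y⟫ ≤ (|q| + 1) * B := by
          calc p * ⟪x, y⟫ ≤ |p * ⟪x, y⟫| := le_abs_self _
            _ = |p| * |(⟪x, y⟫ : ℝ)| := abs_mul _ _
            _ ≤ (|q| + 1) * B :=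
              mul_le_mul hpabs.le (hB x hx) (abs_nonneg _) (by positivity)
        simpa [Real.abs_exp] using Real.exp_le_exp.2 h1
      · exact hconst_int _
      · exact Filter.Eventually.of_forall fun x =>
          (Real.continuous_exp.comp (continuous_id.mul continuous_const)).continuousAt
    have h1 : ContinuousAt (fun p => F p / V) q := hFcont.div_const V
    have h2 : ContinuousAt (fun p => Real.log (F p / V)) q :=
      h1.log (div_pos (hFpos q) hVpos).ne'
    have h3 : ContinuousAt (fun p : ℝ => 1 / p) q :=
      continuousAt_const.div continuousAt_id hq.ne'
    have h4 : ContinuousAt (fun p => hpSupp n p K y) q := by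
      have heq : (fun p => hpSupp n p K y) = fun p => (1 / p) * Real.log (F p / V) :=
        funext hhp
      rw [heq]; exact h3.mul h2
    exact h4.tendsto.mono_left nhdsWithin_le_nhds
  -- Part (c): limit as p → ∞
  set M : ℝ := suppFn n K y with hM_def
  have hMmem : M ∈ (fun x : EuclideanSpace ℝ (Fin n) => (⟪x, y⟫ : ℝ)) '' K :=
    (hKc.image hf_cont).sSup_mem (hKne.image _)
  have hle : ∀ x ∈ K, (⟪x, y⟫ : ℝ) ≤ M := fun x hx =>
    le_csSup (hKc.image hf_cont).bddAbove ⟨x, hx, rfl⟩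
  have hupper : ∀ p : ℝ, 0 < p → hpSupp n p K y ≤ M := by
    intro p hp
    have hFle : F p ≤ V * Real.exp (p * M) := by
      have hmono := setIntegral_mono_on (hint p) (hconst_int (Real.exp (p * M))) hKmeas
        (fun x hx => Real.exp_le_exp.2 (mul_le_mul_of_nonneg_left (hle x hx) hp.le))
      calc F p ≤ ∫ _ in K, Real.exp (p * M) := hmono
        _ = V * Real.exp (p * M) := by rw [setIntegral_const, smul_eq_mul, measureReal_def]
    rw [hhp]
    have h1 : Real.log (F p / V) ≤ p * M := by
      have hle2 : F p / V ≤ Real.exp (p * M) :=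
        (div_le_iff₀ hVpos).2 (hFle.trans_eq (mul_comm _ _))
      calc Real.log (F p / V) ≤ Real.log (Real.exp (p * M)) :=
            Real.log_le_log (div_pos (hFpos p) hVpos) hle2
        _ = p * M := Real.log_exp _
    calc (1 / p) * Real.log (F p / V) ≤ (1 / p) * (p * M) :=
          mul_le_mul_of_nonneg_left h1 (by positivity)
      _ = M := by field_simp
  have hlower : ∀ ε : ℝ, 0 < ε → ∃ c : ℝ, ∀ p : ℝ, 0 < p →
      M - ε + c / p ≤ hpSupp n p K y := by
    intro ε hε
    obtain ⟨x₀, hx₀K, hx₀⟩ := hMmem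
    set U : Set (EuclideanSpace ℝ (Fin n)) := {x | M - ε < ⟪x, y⟫} with hU_def
    have hUopen : IsOpen U := isOpen_lt continuous_const hf_cont
    have hx₀U : x₀ ∈ U := by
      show M - ε < ⟪x₀, y⟫
      have hx₀' : (⟪x₀, y⟫ : ℝ) = M := hx₀
      linarith
    obtain ⟨w, hw⟩ := hKint
    have hz : ∃ z, z ∈ interior K ∩ U := by
      have hcont : ContinuousAt (fun t : ℝ => x₀ + t • (w - x₀)) 0 :=
        (continuous_const.add (continuous_id.smul continuous_const)).continuousAt
      have hmem : (fun t : ℝ => x₀ + t • (w - x₀)) ⁻¹' U ∈ nhds (0 : ℝ) := by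
        apply hcont.preimage_mem_nhds
        rw [show x₀ + (0 : ℝ) • (w - x₀) = x₀ by simp]
        exact hUopen.mem_nhds hx₀U
      obtain ⟨δ', hδ'pos, hball⟩ := Metric.mem_nhds_iff.1 hmem
      set t : ℝ := min (δ' / 2) 1 with ht_def
      have ht0 : 0 < t := lt_min (by linarith) one_pos
      refine ⟨x₀ + t • (w - x₀), ?_, hball ?_⟩
      · exact hKconv.add_smul_sub_mem_interior hx₀K hw ⟨ht0, min_le_right _ _⟩
      · rw [Metric.mem_ball, Real.dist_eq, sub_zero, abs_of_pos ht0]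
        exact lt_of_le_of_lt (min_le_left _ _) (by linarith)
    obtain ⟨z, hzK, hzU⟩ := hz
    set W : Set (EuclideanSpace ℝ (Fin n)) := interior K ∩ U with hW_def
    have hWopen : IsOpen W := isOpen_interior.inter hUopen
    have hWpos : 0 < volume W := hWopen.measure_pos _ ⟨z, hzK, hzU⟩
    have hWK : W ⊆ K := fun x hx => interior_subset hx.1
    have hWfin : volume W < ⊤ := lt_of_le_of_lt (measure_mono hWK) hKfin
    set δ : ℝ := (volume W).toReal with hδ_def
    have hδpos : 0 < δ := ENNReal.toReal_pos hWpos.ne' hWfin.ne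
    refine ⟨Real.log δ - Real.log V, ?_⟩
    intro p hp
    have hWint : IntegrableOn (fun x => Real.exp (p * ⟪x, y⟫)) W volume :=
      (hint p).mono_set hWK
    have h1 : δ * Real.exp (p * (M - ε)) ≤ ∫ x in W, Real.exp (p * ⟪x, y⟫) := by
      have hmono := setIntegral_mono_on
        (integrableOn_const hWfin.ne : IntegrableOn (fun _ => Real.exp (p * (M - ε))) W volume) hWint hWopen.measurableSet
        (fun x hx => Real.exp_le_exp.2 (by
          have h2 : M - ε < ⟪x, y⟫ := hx.2
          exact mul_le_mul_of_nonneg_left h2.le hp.le))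
      calc δ * Real.exp (p * (M - ε)) = ∫ _ in W, Real.exp (p * (M - ε)) := by
            rw [setIntegral_const, smul_eq_mul, measureReal_def]
        _ ≤ _ := hmono
    have h2 : (∫ x in W, Real.exp (p * ⟪x, y⟫)) ≤ F p :=
      setIntegral_mono_set (hint p)
        (Filter.Eventually.of_forall fun x => (Real.exp_pos _).le)
        (HasSubset.Subset.eventuallyLE hWK)
    have hlog : Real.log δ + (p * (M - ε) - Real.log V) ≤ Real.log (F p / V) := by
      have hposl : 0 < δ * Real.exp (p * (M - ε)) / V := by positivity
      have hle2 : δ * Real.exp (p * (M - ε)) / V ≤ F p / V := by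
        gcongr
        linarith
      calc Real.log δ + (p * (M - ε) - Real.log V)
          = Real.log (δ * Real.exp (p * (M - ε)) / V) := by
            rw [Real.log_div (by positivity) hVpos.ne',
              Real.log_mul hδpos.ne' (Real.exp_ne_zero _), Real.log_exp]
            ring
        _ ≤ Real.log (F p / V) := Real.log_le_log hposl hle2
    rw [hhp]
    calc M - ε + (Real.log δ - Real.log V) / p
        = (1 / p) * (Real.log δ + (p * (M - ε) - Real.log V)) := by
          field_simp
          ring
      _ ≤ (1 / p) * Real.log (F p / V) :=
          mul_le_mul_of_nonneg_left hlog (by positivity)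
  refine ⟨key_cont, key_mono, ?_⟩
  rw [tendsto_order]
  constructor
  · intro a ha
    obtain ⟨c, hc⟩ := hlower ((M - a) / 2) (by linarith)
    have hcdiv : Filter.Tendsto (fun p : ℝ => c / p) Filter.atTop (nhds 0) :=
      tendsto_const_nhds.div_atTop Filter.tendsto_id
    have h5 : ∀ᶠ p in Filter.atTop, -((M - a) / 2) < c / p :=
      hcdiv.eventually (eventually_gt_nhds (by linarith))
    filter_upwards [h5, Filter.eventually_gt_atTop (0 : ℝ)] with p hp1 hp2
    have := hc p hp2
    linarith
  · intro a ha
    filter_upwards [Filter.eventually_gt_atTop (0 : ℝ)] with p hp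
    exact lt_of_le_of_lt (hupper p hp) ha


end
end

section
/- Let n ≥ 1 and let K ⊂ ℝⁿ be a convex body. Then M(K) ≤ M_p(K) for every p ∈ (0,∞). If in addition the barycenter b(K) is the origin, then ( p/(1+p)^{1+1/p} )^n · M_p(K) ≤ M(K) for every p ∈ (0,∞), and consequently M_p(K) → M(K) as p → ∞. -/
open MeasureTheory
open scoped RealInnerProductSpace Pointwise ENNReal

noncomputable section

/-- The classical Mahler volume `M(K) = |K|·∫ e^{−h_K}`, valued in `[0,∞]`. -/
def mahlerME (n : ℕ) (K : Set (EuclideanSpace ℝ (Fin n))) : ℝ≥0∞ :=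
  volume K * ∫⁻ y, ENNReal.ofReal (Real.exp (-(suppFn n K y)))

variable {n : ℕ} {K : Set (EuclideanSpace ℝ (Fin n))}

lemma volK_pos (hKint : (interior K).Nonempty) : 0 < volume K :=
  lt_of_lt_of_le (isOpen_interior.measure_pos volume hKint) (measure_mono interior_subset)

lemma volK_toReal_pos (hKc : IsCompact K) (hKint : (interior K).Nonempty) :
    0 < (volume K).toReal :=
  ENNReal.toReal_pos (volK_pos hKint).ne' hKc.measure_lt_top.ne

lemma innerCont (y : EuclideanSpace ℝ (Fin n)) :
    Continuous fun x : EuclideanSpace ℝ (Fin n) => ⟪x, y⟫ :=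
  continuous_id.inner continuous_const

lemma suppFn_eq_max (hKc : IsCompact K) (hne : K.Nonempty) (y : EuclideanSpace ℝ (Fin n)) :
    ∃ x ∈ K, (∀ z ∈ K, ⟪z, y⟫ ≤ ⟪x, y⟫) ∧ suppFn n K y = ⟪x, y⟫ := by
  obtain ⟨x, hxK, hmax⟩ := hKc.exists_isMaxOn hne (innerCont y).continuousOn
  refine ⟨x, hxK, hmax, ?_⟩
  refine IsGreatest.csSup_eq ⟨Set.mem_image_of_mem _ hxK, ?_⟩
  rintro _ ⟨z, hz, rfl⟩; exact hmax hz

lemma le_suppFn (hKc : IsCompact K) {x : EuclideanSpace ℝ (Fin n)} (hx : x ∈ K)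
    (y : EuclideanSpace ℝ (Fin n)) : ⟪x, y⟫ ≤ suppFn n K y := by
  obtain ⟨x', _, h1, h2⟩ := suppFn_eq_max hKc ⟨x, hx⟩ y
  rw [h2]; exact h1 x hx

lemma suppFn_smul (hKc : IsCompact K) (hne : K.Nonempty) {c : ℝ} (hc : 0 ≤ c)
    (y : EuclideanSpace ℝ (Fin n)) : suppFn n K (c • y) = c * suppFn n K y := by
  obtain ⟨x, hxK, h1, h2⟩ := suppFn_eq_max hKc hne y
  have : suppFn n K (c • y) = ⟪x, c • y⟫ := by
    refine IsGreatest.csSup_eq ⟨Set.mem_image_of_mem _ hxK, ?_⟩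
    rintro _ ⟨z, hz, rfl⟩
    show ⟪z, c • y⟫ ≤ ⟪x, c • y⟫
    rw [real_inner_smul_right, real_inner_smul_right]
    exact mul_le_mul_of_nonneg_left (h1 z hz) hc
  rw [this, real_inner_smul_right, h2]

lemma integrableOn_exp_inner (hKc : IsCompact K) (c : ℝ) (y : EuclideanSpace ℝ (Fin n)) :
    IntegrableOn (fun x => Real.exp (c * ⟪x, y⟫)) K volume :=
  (Real.continuous_exp.comp ((continuous_const.mul (innerCont y)))).continuousOn.integrableOn_compact hKc

lemma setIntegral_exp_inner_pos (hKc : IsCompact K) (hKint : (interior K).Nonempty)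
    (c : ℝ) (y : EuclideanSpace ℝ (Fin n)) :
    0 < ∫ x in K, Real.exp (c * ⟪x, y⟫) := by
  rw [setIntegral_pos_iff_support_of_nonneg_ae
    (Filter.Eventually.of_forall fun x => (Real.exp_pos _).le)
    (integrableOn_exp_inner hKc c y)]
  have : (Function.support fun x : EuclideanSpace ℝ (Fin n) => Real.exp (c * ⟪x, y⟫)) = Set.univ := by
    ext x; simp [Function.mem_support, (Real.exp_pos _).ne']
  rw [this, Set.univ_inter]
  exact volK_pos hKint

lemma hpSupp_le_suppFn (hKc : IsCompact K) (hKint : (interior K).Nonempty)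
    {p : ℝ} (hp : 0 < p) (y : EuclideanSpace ℝ (Fin n)) :
    hpSupp n p K y ≤ suppFn n K y := by
  have hne : K.Nonempty := hKint.mono interior_subset
  have hvol := volK_toReal_pos hKc hKint
  have hI : (∫ x in K, Real.exp (p * ⟪x, y⟫)) ≤ (volume K).toReal * Real.exp (p * suppFn n K y) := by
    have : (∫ x in K, Real.exp (p * ⟪x, y⟫)) ≤ ∫ _x in K, Real.exp (p * suppFn n K y) := by
      refine setIntegral_mono_on (integrableOn_exp_inner hKc p y)
        (integrableOn_const hKc.measure_lt_top.ne) hKc.isClosed.measurableSet ?_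
      intro x hx
      exact Real.exp_le_exp.2 (mul_le_mul_of_nonneg_left (le_suppFn hKc hx y) hp.le)
    simpa [Measure.restrict_apply_univ, smul_eq_mul, measureReal_def] using this
  have hIpos := setIntegral_exp_inner_pos hKc hKint p y
  have hdiv : (∫ x in K, Real.exp (p * ⟪x, y⟫)) / (volume K).toReal ≤ Real.exp (p * suppFn n K y) :=
    (div_le_iff₀ hvol).2 (by linarith [hI])
  have hlog : Real.log ((∫ x in K, Real.exp (p * ⟪x, y⟫)) / (volume K).toReal)
      ≤ p * suppFn n K y := by
    calc Real.log _ ≤ Real.log (Real.exp (p * suppFn n K y)) :=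
          Real.log_le_log (div_pos hIpos hvol) hdiv
    _ = p * suppFn n K y := Real.log_exp _
  rw [hpSupp]
  calc (1/p) * Real.log _ ≤ (1/p) * (p * suppFn n K y) :=
        mul_le_mul_of_nonneg_left hlog (by positivity)
  _ = suppFn n K y := by field_simp

lemma jensen_bound (hKc : IsCompact K) (hKint : (interior K).Nonempty)
    (hb : (∫ x in K, x) = 0) (c : ℝ) (y : EuclideanSpace ℝ (Fin n)) :
    (volume K).toReal ≤ ∫ x in K, Real.exp (c * ⟪x, y⟫) := by
  set μ := volume.restrict K with hμ
  have hfin : IsFiniteMeasure μ := ⟨by rw [hμ, Measure.restrict_apply_univ]; exact hKc.measure_lt_top⟩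
  have hne : NeZero μ := ⟨by
    intro h
    have : volume K = 0 := by
      rw [← Measure.restrict_apply_univ, ← hμ, h]; rfl
    exact (volK_pos hKint).ne' this⟩
  have hvol := volK_toReal_pos hKc hKint
  have hμuniv : μ Set.univ = volume K := by rw [hμ, Measure.restrict_apply_univ]
  have hfi : Integrable (fun x => c * ⟪x, y⟫) μ :=
    ((continuous_const.mul (innerCont y)).continuousOn.integrableOn_compact hKc)
  have hgi : Integrable (fun x => Real.exp (c * ⟪x, y⟫)) μ := integrableOn_exp_inner hKc c y
  have havg : (⨍ x, c * ⟪x, y⟫ ∂μ) = 0 := by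
    rw [average_eq, integral_const_mul]
    have hid : Integrable (fun x : EuclideanSpace ℝ (Fin n) => x) μ :=
      continuous_id.continuousOn.integrableOn_compact hKc
    have : (∫ x, ⟪x, y⟫ ∂μ) = ⟪(∫ x, x ∂μ), y⟫ := by
      have h1 : (∫ x, ⟪y, x⟫ ∂μ) = ⟪y, (∫ x, x ∂μ)⟫ := integral_inner hid y
      calc (∫ x, ⟪x, y⟫ ∂μ) = ∫ x, ⟪y, x⟫ ∂μ := by
            congr 1; ext x; exact real_inner_comm _ _
      _ = ⟪y, (∫ x, x ∂μ)⟫ := h1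
      _ = _ := real_inner_comm _ _
    rw [this, hb, inner_zero_left, mul_zero, smul_zero]
  have hjen := (convexOn_exp).map_average_le Real.continuous_exp.continuousOn isClosed_univ
    (Filter.Eventually.of_forall fun x => Set.mem_univ _) hfi hgi
  rw [havg, Real.exp_zero, average_eq, measureReal_def, hμuniv, smul_eq_mul] at hjen
  calc (volume K).toReal = (volume K).toReal * 1 := (mul_one _).symm
  _ ≤ (volume K).toReal * ((volume K).toReal⁻¹ * ∫ x, Real.exp (c * ⟪x, y⟫) ∂μ) :=
      mul_le_mul_of_nonneg_left hjen hvol.le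
  _ = ∫ x in K, Real.exp (c * ⟪x, y⟫) := by
      rw [← mul_assoc, mul_inv_cancel₀ hvol.ne', one_mul]

lemma key_lower (hKc : IsCompact K) (hKconv : Convex ℝ K) (hKint : (interior K).Nonempty)
    (hb : (∫ x in K, x) = 0) {p : ℝ} (hp : 0 < p) (y : EuclideanSpace ℝ (Fin n)) :
    (1 / (1 + p)) ^ n * Real.exp (p * (p / (1 + p)) * suppFn n K y) * (volume K).toReal
      ≤ ∫ x in K, Real.exp (p * ⟪x, y⟫) := by
  have hne : K.Nonempty := hKint.mono interior_subset
  obtain ⟨xs, hxsK, hmax, hsupp⟩ := suppFn_eq_max hKc hne y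
  set l : ℝ := p / (1 + p) with hl
  have h1p : (0:ℝ) < 1 + p := by linarith
  have hl0 : 0 < l := div_pos hp h1p
  have hl1 : l < 1 := by rw [hl, div_lt_one h1p]; linarith
  have h1l : 1 - l = 1 / (1 + p) := by rw [hl]; field_simp; ring
  have h1lpos : 0 < 1 - l := by linarith
  set T : EuclideanSpace ℝ (Fin n) → EuclideanSpace ℝ (Fin n) :=
    fun z => l • xs + (1 - l) • z with hT
  have hTK : T '' K ⊆ K := by
    rintro _ ⟨z, hz, rfl⟩
    exact hKconv hxsK hz hl0.le h1lpos.le (by ring)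
  -- change of variables
  have hderiv : ∀ x ∈ K, HasFDerivWithinAt T
      ((1 - l) • (1 : EuclideanSpace ℝ (Fin n) →L[ℝ] EuclideanSpace ℝ (Fin n))) K x := by
    intro x _
    have : HasFDerivAt T ((1 - l) • (1 : EuclideanSpace ℝ (Fin n) →L[ℝ] EuclideanSpace ℝ (Fin n))) x := by
      simpa [hT, ContinuousLinearMap.one_def] using ((hasFDerivAt_id x).const_smul (1 - l)).const_add (l • xs)
    exact this.hasFDerivWithinAt
  have hinj : Set.InjOn T K := by
    intro a _ b _ hab
    have : (1 - l) • a = (1 - l) • b := by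
      have := hab; simp only [hT] at this
      exact add_left_cancel this
    exact smul_right_injective _ h1lpos.ne' this
  have hdet : ((1 - l) • (1 : EuclideanSpace ℝ (Fin n) →L[ℝ] EuclideanSpace ℝ (Fin n))).det
      = (1 - l) ^ n := by
    have h1 : (((1 : EuclideanSpace ℝ (Fin n) →L[ℝ] EuclideanSpace ℝ (Fin n))) :
        EuclideanSpace ℝ (Fin n) →ₗ[ℝ] EuclideanSpace ℝ (Fin n))
        = (LinearMap.id : EuclideanSpace ℝ (Fin n) →ₗ[ℝ] EuclideanSpace ℝ (Fin n)) := rfl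
    rw [ContinuousLinearMap.det, ContinuousLinearMap.coe_smul, h1, LinearMap.det_smul,
      LinearMap.det_id, mul_one, finrank_euclideanSpace_fin]
  have hcov := integral_image_eq_integral_abs_det_fderiv_smul volume hKc.isClosed.measurableSet
    hderiv hinj (fun x => Real.exp (p * ⟪x, y⟫))
  have hstep1 : (∫ x in T '' K, Real.exp (p * ⟪x, y⟫)) ≤ ∫ x in K, Real.exp (p * ⟪x, y⟫) := by
    refine setIntegral_mono_set (integrableOn_exp_inner hKc p y)
      (Filter.Eventually.of_forall fun x => (Real.exp_pos _).le) hTK.eventuallyLE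
  -- compute the image integral
  have hinner : ∀ z : EuclideanSpace ℝ (Fin n),
      p * ⟪T z, y⟫ = p * l * ⟪xs, y⟫ + p * (1 - l) * ⟪z, y⟫ := by
    intro z
    simp only [hT]
    rw [inner_add_left, real_inner_smul_left, real_inner_smul_left]
    ring
  have hcomp : (∫ x in T '' K, Real.exp (p * ⟪x, y⟫))
      = (1 - l) ^ n * (Real.exp (p * l * ⟪xs, y⟫) * ∫ z in K, Real.exp (p * (1 - l) * ⟪z, y⟫)) := by
    rw [hcov]
    have : ∀ z, |((1 - l) • (1 : EuclideanSpace ℝ (Fin n) →L[ℝ] EuclideanSpace ℝ (Fin n))).det|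
        • Real.exp (p * ⟪T z, y⟫)
        = (1 - l) ^ n * (Real.exp (p * l * ⟪xs, y⟫) * Real.exp (p * (1 - l) * ⟪z, y⟫)) := by
      intro z
      rw [hdet, abs_of_pos (pow_pos h1lpos n), hinner z, Real.exp_add, smul_eq_mul]
    rw [MeasureTheory.setIntegral_congr_fun hKc.isClosed.measurableSet (fun z _ => this z)]
    simp [MeasureTheory.integral_const_mul, mul_assoc]
  have hjen := jensen_bound hKc hKint hb (p * (1 - l)) y
  calc (1 / (1 + p)) ^ n * Real.exp (p * l * suppFn n K y) * (volume K).toReal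
      = (1 - l) ^ n * (Real.exp (p * l * ⟪xs, y⟫) * (volume K).toReal) := by
        rw [h1l, hsupp]; ring
  _ ≤ (1 - l) ^ n * (Real.exp (p * l * ⟪xs, y⟫) * ∫ z in K, Real.exp (p * (1 - l) * ⟪z, y⟫)) := by
        refine mul_le_mul_of_nonneg_left (mul_le_mul_of_nonneg_left hjen (Real.exp_pos _).le)
          (pow_nonneg h1lpos.le n)
  _ = ∫ x in T '' K, Real.exp (p * ⟪x, y⟫) := hcomp.symm
  _ ≤ ∫ x in K, Real.exp (p * ⟪x, y⟫) := hstep1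

lemma hpSupp_lower (hKc : IsCompact K) (hKconv : Convex ℝ K) (hKint : (interior K).Nonempty)
    (hb : (∫ x in K, x) = 0) {p : ℝ} (hp : 0 < p) (y : EuclideanSpace ℝ (Fin n)) :
    (p / (1 + p)) * suppFn n K y - ((n : ℝ) / p) * Real.log (1 + p) ≤ hpSupp n p K y := by
  have h1p : (0:ℝ) < 1 + p := by linarith
  have hvol := volK_toReal_pos hKc hKint
  have hkey := key_lower hKc hKconv hKint hb hp y
  have hRHSpos : 0 < (1 / (1 + p)) ^ n * Real.exp (p * (p / (1 + p)) * suppFn n K y) := by positivity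
  have hdiv : (1 / (1 + p)) ^ n * Real.exp (p * (p / (1 + p)) * suppFn n K y)
      ≤ (∫ x in K, Real.exp (p * ⟪x, y⟫)) / (volume K).toReal := by
    rw [le_div_iff₀ hvol]; exact hkey
  have hlog : Real.log ((1 / (1 + p)) ^ n * Real.exp (p * (p / (1 + p)) * suppFn n K y))
      ≤ Real.log ((∫ x in K, Real.exp (p * ⟪x, y⟫)) / (volume K).toReal) :=
    Real.log_le_log hRHSpos hdiv
  have hcalc : Real.log ((1 / (1 + p)) ^ n * Real.exp (p * (p / (1 + p)) * suppFn n K y))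
      = -(n : ℝ) * Real.log (1 + p) + p * (p / (1 + p)) * suppFn n K y := by
    rw [Real.log_mul (by positivity) (Real.exp_pos _).ne', Real.log_pow, Real.log_exp,
      one_div, Real.log_inv]
    ring
  rw [hpSupp]
  rw [hcalc] at hlog
  have := mul_le_mul_of_nonneg_left hlog (by positivity : (0:ℝ) ≤ 1/p)
  calc (p / (1 + p)) * suppFn n K y - ((n : ℝ) / p) * Real.log (1 + p)
      = (1/p) * (-(n : ℝ) * Real.log (1 + p) + p * (p / (1 + p)) * suppFn n K y) := by
        field_simp; ring
  _ ≤ _ := this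

lemma lintegral_comp_smul_E (f : EuclideanSpace ℝ (Fin n) → ℝ≥0∞) {R : ℝ} (hR : R ≠ 0) :
    ∫⁻ x, f (R • x) = ENNReal.ofReal |(R ^ n)⁻¹| * ∫⁻ x, f x := by
  calc ∫⁻ x, f (R • x)
      = ∫⁻ y, f y ∂(Measure.map (fun x => R • x) volume) :=
        (lintegral_map_equiv f (Homeomorph.smul (isUnit_iff_ne_zero.2 hR).unit).toMeasurableEquiv).symm
  _ = ENNReal.ofReal |(R ^ n)⁻¹| * ∫⁻ x, f x := by
      rw [MeasureTheory.Measure.map_addHaar_smul volume hR, lintegral_smul_measure, finrank_euclideanSpace_fin, smul_eq_mul]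

lemma lint_bound (hKc : IsCompact K) (hKconv : Convex ℝ K) (hKint : (interior K).Nonempty)
    (hb : (∫ x in K, x) = 0) {p : ℝ} (hp : 0 < p) :
    (∫⁻ y, ENNReal.ofReal (Real.exp (-(hpSupp n p K y))))
      ≤ ENNReal.ofReal (Real.exp (((n : ℝ) / p) * Real.log (1 + p)))
        * (ENNReal.ofReal |((p / (1 + p)) ^ n)⁻¹|
          * ∫⁻ y, ENNReal.ofReal (Real.exp (-(suppFn n K y)))) := by
  have hne : K.Nonempty := hKint.mono interior_subset
  have h1p : (0:ℝ) < 1 + p := by linarith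
  have hl0 : 0 < p / (1 + p) := div_pos hp h1p
  set A : ℝ := Real.exp (((n : ℝ) / p) * Real.log (1 + p)) with hA
  have hpt : ∀ y, ENNReal.ofReal (Real.exp (-(hpSupp n p K y)))
      ≤ ENNReal.ofReal (A * Real.exp (-(suppFn n K ((p / (1 + p)) • y)))) := by
    intro y
    refine ENNReal.ofReal_le_ofReal ?_
    rw [suppFn_smul hKc hne hl0.le y, ← Real.exp_add]
    refine Real.exp_le_exp.2 ?_
    have := hpSupp_lower hKc hKconv hKint hb hp y
    linarith
  calc (∫⁻ y, ENNReal.ofReal (Real.exp (-(hpSupp n p K y))))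
      ≤ ∫⁻ y, ENNReal.ofReal (A * Real.exp (-(suppFn n K ((p / (1 + p)) • y)))) :=
        lintegral_mono hpt
  _ = ∫⁻ y, ENNReal.ofReal A * ENNReal.ofReal (Real.exp (-(suppFn n K ((p / (1 + p)) • y)))) := by
        congr 1; ext y; rw [ENNReal.ofReal_mul (Real.exp_pos _).le]
  _ = ENNReal.ofReal A * ∫⁻ y, ENNReal.ofReal (Real.exp (-(suppFn n K ((p / (1 + p)) • y)))) :=
        lintegral_const_mul' _ _ ENNReal.ofReal_ne_top
  _ = ENNReal.ofReal A * (ENNReal.ofReal |((p / (1 + p)) ^ n)⁻¹|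
        * ∫⁻ y, ENNReal.ofReal (Real.exp (-(suppFn n K y)))) := by
        rw [lintegral_comp_smul_E (fun y => ENNReal.ofReal (Real.exp (-(suppFn n K y)))) hl0.ne']

lemma const_id {p : ℝ} (hp : 0 < p) (n : ℕ) :
    (p / (1 + p) ^ ((1 : ℝ) + 1 / p)) ^ n * Real.exp (((n : ℝ) / p) * Real.log (1 + p))
      * |((p / (1 + p)) ^ n)⁻¹| = 1 := by
  have h1p : (0:ℝ) < 1 + p := by linarith
  set q : ℝ := (1 + p) ^ ((1 : ℝ) / p) with hq
  have hqpos : 0 < q := Real.rpow_pos_of_pos h1p _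
  have hA : Real.exp (((n : ℝ) / p) * Real.log (1 + p)) = q ^ n := by
    rw [hq, ← Real.rpow_natCast ((1 + p) ^ ((1:ℝ)/p)) n, ← Real.rpow_mul h1p.le]
    rw [Real.rpow_def_of_pos h1p]
    congr 1; ring
  have hsplit : (1 + p) ^ ((1 : ℝ) + 1 / p) = (1 + p) * q := by
    rw [hq, Real.rpow_add h1p, Real.rpow_one]
  have habs : |((p / (1 + p)) ^ n)⁻¹| = ((p / (1 + p)) ^ n)⁻¹ := by
    rw [abs_of_pos]; positivity
  rw [hA, hsplit, habs, div_pow, div_pow]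
  rw [mul_pow (1 + p) q n]
  field_simp

lemma zero_mem_interior (hKc : IsCompact K) (hKconv : Convex ℝ K) (hKint : (interior K).Nonempty)
    (hb : (∫ x in K, x) = 0) : (0 : EuclideanSpace ℝ (Fin n)) ∈ interior K := by
  by_contra h0
  obtain ⟨f, hf⟩ := geometric_hahn_banach_open_point hKconv.interior isOpen_interior h0
  have hf0 : ∀ a ∈ interior K, f a < 0 := by
    intro a ha; have := hf a ha; simpa using this
  obtain ⟨w, hw⟩ := hKint
  have hKle : ∀ x ∈ K, f x ≤ 0 := by
    intro x hx
    by_contra hpos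
    push_neg at hpos
    set c : ℝ := f (w - x) with hc
    have key : ∀ t : ℝ, t ∈ Set.Ioc (0:ℝ) 1 → f x + t * c < 0 := by
      intro t ht
      have hmem := hKconv.add_smul_sub_mem_interior hx hw ht
      have h2 := hf0 _ hmem
      rw [map_add, _root_.map_smul, smul_eq_mul] at h2
      exact h2
    have htpos : 0 < min 1 (f x / (|c| + 1)) := by
      apply lt_min one_pos
      positivity
    have habs : 0 ≤ |c| := abs_nonneg c
    have h1 := key _ ⟨htpos, min_le_left _ _⟩
    have h2 : min 1 (f x / (|c| + 1)) * c ≥ -(min 1 (f x / (|c| + 1)) * |c|) := by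
      have := neg_abs_le c
      nlinarith [htpos.le]
    have h3 : min 1 (f x / (|c| + 1)) * |c| ≤ (f x / (|c| + 1)) * |c| :=
      mul_le_mul_of_nonneg_right (min_le_right _ _) habs
    have h4 : (f x / (|c| + 1)) * |c| < f x := by
      rw [div_mul_eq_mul_div, div_lt_iff₀ (by positivity)]
      nlinarith
    linarith
  have hid : IntegrableOn (fun x : EuclideanSpace ℝ (Fin n) => x) K volume :=
    continuous_id.continuousOn.integrableOn_compact hKc
  have hIf : (∫ x in K, f x) = 0 := by
    rw [ContinuousLinearMap.integral_comp_comm f hid, hb, map_zero]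
  have hfint : IntegrableOn (fun x => f x) K volume :=
    f.continuous.continuousOn.integrableOn_compact hKc
  have hmeasI : MeasurableSet (interior K) := isOpen_interior.measurableSet
  have hnegint : 0 < ∫ x in interior K, -(f x) := by
    rw [setIntegral_pos_iff_support_of_nonneg_ae
      ((ae_restrict_iff' hmeasI).2 (Filter.Eventually.of_forall
        fun x hx => neg_nonneg.2 (hf0 x hx).le))
      ((hfint.mono_set interior_subset).neg)]
    have hss : Function.support (fun x => -(f x)) ∩ interior K = interior K := by
      apply Set.inter_eq_self_of_subset_right
      intro x hx
      simp only [Function.mem_support, neg_ne_zero]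
      exact (hf0 x hx).ne
    rw [hss]
    exact isOpen_interior.measure_pos volume ⟨w, hw⟩
  have hIneg : (∫ x in interior K, f x) < 0 := by
    have : (∫ x in interior K, -(f x)) = -(∫ x in interior K, f x) := integral_neg _
    linarith [hnegint, this ▸ hnegint]
  have hsplit : (∫ x in K, f x)
      = (∫ x in interior K, f x) + ∫ x in K \ interior K, f x := by
    rw [← setIntegral_union Set.disjoint_sdiff_right
      (hKc.isClosed.measurableSet.diff hmeasI)
      (hfint.mono_set interior_subset) (hfint.mono_set Set.diff_subset),
      Set.union_diff_cancel interior_subset]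
  have hdiffle : (∫ x in K \ interior K, f x) ≤ 0 :=
    setIntegral_nonpos (hKc.isClosed.measurableSet.diff hmeasI)
      (fun x hx => hKle x hx.1)
  linarith [hIf, hsplit, hIneg, hdiffle]

lemma exists_suppFn_lower (hKc : IsCompact K) (hne : K.Nonempty)
    (h0 : (0 : EuclideanSpace ℝ (Fin n)) ∈ interior K) :
    ∃ ε : ℝ, 0 < ε ∧ ∀ y : EuclideanSpace ℝ (Fin n), ε * ‖y‖ ≤ suppFn n K y := by
  obtain ⟨ε, hε, hball⟩ := Metric.mem_nhds_iff.1 (mem_interior_iff_mem_nhds.1 h0)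
  refine ⟨ε / 2, by positivity, fun y => ?_⟩
  rcases eq_or_ne y 0 with rfl | hy
  · obtain ⟨x, hx, _, hsupp⟩ := suppFn_eq_max hKc hne 0
    rw [hsupp, inner_zero_right, norm_zero, mul_zero]
  · have hynorm : 0 < ‖y‖ := norm_pos_iff.2 hy
    set x : EuclideanSpace ℝ (Fin n) := (ε / 2 / ‖y‖) • y with hxdef
    have hxK : x ∈ K := by
      apply hball
      rw [Metric.mem_ball, dist_zero_right, hxdef, norm_smul]
      rw [Real.norm_eq_abs, abs_of_pos (by positivity)]
      rw [div_mul_eq_mul_div, mul_div_assoc, div_self hynorm.ne', mul_one]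
      linarith
    have := le_suppFn hKc hxK y
    rw [hxdef, real_inner_smul_left, real_inner_self_eq_norm_sq] at this
    calc ε / 2 * ‖y‖ = ε / 2 / ‖y‖ * ‖y‖ ^ 2 := by
          field_simp
    _ ≤ suppFn n K y := this

lemma lintegral_exp_neg_norm_lt_top {ε : ℝ} (hε : 0 < ε) :
    (∫⁻ y : EuclideanSpace ℝ (Fin n), ENNReal.ofReal (Real.exp (-(ε * ‖y‖)))) < ⊤ := by
  -- bound by C * (1 + ‖y‖)^(-(n+1))
  set r : ℝ := (n : ℝ) + 1 with hr
  have hnr : (Module.finrank ℝ (EuclideanSpace ℝ (Fin n)) : ℝ) < r := by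
    rw [finrank_euclideanSpace_fin, hr]; linarith
  have hinteg := integrable_one_add_norm (E := EuclideanSpace ℝ (Fin n)) (μ := volume) hnr
  -- find a bound C on (1+t)^r * exp(-ε t) for t ≥ 0
  have hbdd : ∃ C : ℝ, 0 < C ∧ ∀ t : ℝ, 0 ≤ t → (1 + t) ^ r * Real.exp (-(ε * t)) ≤ C := by
    have htend : Filter.Tendsto (fun t : ℝ => (1 + t) ^ r * Real.exp (-(ε * (1 + t))))
        Filter.atTop (nhds 0) := by
      have := (tendsto_rpow_mul_exp_neg_mul_atTop_nhds_zero r ε hε).comp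
        (Filter.tendsto_atTop_add_const_left Filter.atTop 1 Filter.tendsto_id)
      simpa [Function.comp_def, neg_mul] using this
    have hev : ∀ᶠ t : ℝ in Filter.atTop, (1 + t) ^ r * Real.exp (-(ε * (1 + t))) ≤ 1 :=
      Filter.Tendsto.eventually_le_const one_pos htend
    obtain ⟨T, hT⟩ := Filter.eventually_atTop.1 hev
    have hcont : ContinuousOn (fun t : ℝ => (1 + t) ^ r * Real.exp (-(ε * t)))
        (Set.Icc 0 (max T 0)) := by
      apply ContinuousOn.mul
      · apply ContinuousOn.rpow_const (by fun_prop)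
        intro t ht
        left
        have := ht.1
        intro h; linarith [h]
      · fun_prop
    obtain ⟨C0, hC0⟩ := (isCompact_Icc (a := (0:ℝ)) (b := max T 0)).exists_bound_of_continuousOn hcont
    refine ⟨max C0 (Real.exp ε) + 1, by positivity, fun t ht => ?_⟩
    rcases le_or_gt t (max T 0) with hcase | hcase
    · have := hC0 t ⟨ht, hcase⟩
      have h2 : (1 + t) ^ r * Real.exp (-(ε * t)) ≤ ‖(1 + t) ^ r * Real.exp (-(ε * t))‖ :=
        le_abs_self _
      calc (1 + t) ^ r * Real.exp (-(ε * t)) ≤ C0 := le_trans h2 this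
      _ ≤ max C0 (Real.exp ε) + 1 := by
          have := le_max_left C0 (Real.exp ε); linarith
    · have hTt : T ≤ t := le_trans (le_max_left T 0) hcase.le
      have := hT t hTt
      have hsplit : Real.exp (-(ε * t)) = Real.exp ε * Real.exp (-(ε * (1 + t))) := by
        rw [← Real.exp_add]; ring_nf
      calc (1 + t) ^ r * Real.exp (-(ε * t))
          = Real.exp ε * ((1 + t) ^ r * Real.exp (-(ε * (1 + t)))) := by
            rw [hsplit]; ring
      _ ≤ Real.exp ε * 1 := mul_le_mul_of_nonneg_left this (Real.exp_pos _).le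
      _ ≤ max C0 (Real.exp ε) + 1 := by
          have := le_max_right C0 (Real.exp ε); linarith
  obtain ⟨C, hCpos, hC⟩ := hbdd
  have hpt : ∀ y : EuclideanSpace ℝ (Fin n),
      ENNReal.ofReal (Real.exp (-(ε * ‖y‖))) ≤ ENNReal.ofReal (C * (1 + ‖y‖) ^ (-r)) := by
    intro y
    refine ENNReal.ofReal_le_ofReal ?_
    have h1 : (0:ℝ) < 1 + ‖y‖ := by positivity
    have h2 := hC ‖y‖ (norm_nonneg y)
    rw [Real.rpow_neg h1.le]
    rw [← le_div_iff₀' (Real.rpow_pos_of_pos h1 r), div_eq_mul_inv] at h2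
    exact h2
  calc (∫⁻ y : EuclideanSpace ℝ (Fin n), ENNReal.ofReal (Real.exp (-(ε * ‖y‖))))
      ≤ ∫⁻ y : EuclideanSpace ℝ (Fin n), ENNReal.ofReal (C * (1 + ‖y‖) ^ (-r)) :=
        lintegral_mono hpt
  _ < ⊤ := (hinteg.const_mul C).lintegral_lt_top



lemma mahlerME_ne_top (hKc : IsCompact K) (hne : K.Nonempty)
    (h0 : (0 : EuclideanSpace ℝ (Fin n)) ∈ interior K) : mahlerME n K ≠ ⊤ := by
  obtain ⟨ε, hε, hlow⟩ := exists_suppFn_lower hKc hne h0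
  refine ENNReal.mul_ne_top hKc.measure_lt_top.ne (ne_top_of_le_ne_top
    (lintegral_exp_neg_norm_lt_top hε).ne (lintegral_mono fun y => ?_))
  exact ENNReal.ofReal_le_ofReal (Real.exp_le_exp.2 (neg_le_neg (hlow y)))

lemma part1_le (hKc : IsCompact K) (hKint : (interior K).Nonempty)
    {p : ℝ} (hp : 0 < p) : mahlerME n K ≤ mahlerVolE n p K :=
  mul_le_mul_right (lintegral_mono fun y => ENNReal.ofReal_le_ofReal
    (Real.exp_le_exp.2 (neg_le_neg (hpSupp_le_suppFn hKc hKint hp y)))) _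

lemma part2_le (hKc : IsCompact K) (hKconv : Convex ℝ K) (hKint : (interior K).Nonempty)
    (hb : (∫ x in K, x) = 0) {p : ℝ} (hp : 0 < p) :
    ENNReal.ofReal ((p / (1 + p) ^ (1 + 1 / p)) ^ n) * mahlerVolE n p K ≤ mahlerME n K := by
  have h1p : (0:ℝ) < 1 + p := by linarith
  set c : ℝ := (p / (1 + p) ^ (1 + 1 / p)) ^ n with hc
  set A : ℝ := Real.exp (((n : ℝ) / p) * Real.log (1 + p)) with hA
  set B : ℝ := |((p / (1 + p)) ^ n)⁻¹| with hB
  have hcnn : 0 ≤ c := by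
    rw [hc]; positivity
  have hAnn : 0 ≤ A := (Real.exp_pos _).le
  have hlint := lint_bound hKc hKconv hKint hb hp
  calc ENNReal.ofReal c * mahlerVolE n p K
      = ENNReal.ofReal c * (volume K * ∫⁻ y, ENNReal.ofReal (Real.exp (-(hpSupp n p K y)))) := rfl
  _ ≤ ENNReal.ofReal c * (volume K * (ENNReal.ofReal A * (ENNReal.ofReal B
        * ∫⁻ y, ENNReal.ofReal (Real.exp (-(suppFn n K y)))))) :=
      mul_le_mul_right (mul_le_mul_right hlint _) _
  _ = (ENNReal.ofReal c * ENNReal.ofReal A * ENNReal.ofReal B)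
        * (volume K * ∫⁻ y, ENNReal.ofReal (Real.exp (-(suppFn n K y)))) := by ring
  _ = ENNReal.ofReal (c * A * B) * mahlerME n K := by
      rw [← ENNReal.ofReal_mul hcnn, ← ENNReal.ofReal_mul (mul_nonneg hcnn hAnn)]; rfl
  _ = mahlerME n K := by
      rw [hc, hA, hB, const_id hp n, ENNReal.ofReal_one, one_mul]

lemma tendsto_const_one (n : ℕ) :
    Filter.Tendsto (fun p : ℝ => (p / (1 + p) ^ (1 + 1 / p)) ^ n)
      Filter.atTop (nhds 1) := by
  have t1 : Filter.Tendsto (fun p : ℝ => p / (1 + p)) Filter.atTop (nhds 1) := by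
    have hadd : Filter.Tendsto (fun p : ℝ => 1 + p) Filter.atTop Filter.atTop :=
      Filter.tendsto_atTop_add_const_left Filter.atTop 1 Filter.tendsto_id
    have h : Filter.Tendsto (fun p : ℝ => (1 + p)⁻¹) Filter.atTop (nhds 0) :=
      tendsto_inv_atTop_zero.comp hadd
    have heq : ∀ᶠ p : ℝ in Filter.atTop, 1 - (1 + p)⁻¹ = p / (1 + p) := by
      filter_upwards [Filter.eventually_gt_atTop (0:ℝ)] with p hp
      have : (1:ℝ) + p ≠ 0 := by linarith
      field_simp
      ring
    have := (tendsto_const_nhds (x := (1:ℝ)) (f := Filter.atTop)).sub h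
    rw [sub_zero] at this
    exact Filter.Tendsto.congr' heq this
  have hadd : Filter.Tendsto (fun p : ℝ => 1 + p) Filter.atTop Filter.atTop :=
    Filter.tendsto_atTop_add_const_left Filter.atTop 1 Filter.tendsto_id
  have t2 : Filter.Tendsto (fun p : ℝ => (1 + p) ^ ((1:ℝ) / p)) Filter.atTop (nhds 1) := by
    have hlog : Filter.Tendsto (fun p : ℝ => Real.log (1 + p) / (1 + p))
        Filter.atTop (nhds 0) :=
      Real.isLittleO_log_id_atTop.tendsto_div_nhds_zero.comp hadd
    have hrat : Filter.Tendsto (fun p : ℝ => (1 + p) / p) Filter.atTop (nhds 1) := by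
      have h1 : Filter.Tendsto (fun p : ℝ => p⁻¹ + 1) Filter.atTop (nhds 1) := by
        have := tendsto_inv_atTop_zero (𝕜 := ℝ)
        have := this.add (tendsto_const_nhds (x := (1:ℝ)))
        simpa using this
      refine h1.congr' ?_
      filter_upwards [Filter.eventually_gt_atTop (0:ℝ)] with p hp
      field_simp
    have harg : Filter.Tendsto (fun p : ℝ => 1 / p * Real.log (1 + p))
        Filter.atTop (nhds 0) := by
      have := hlog.mul hrat
      rw [zero_mul] at this
      refine this.congr' ?_
      filter_upwards [Filter.eventually_gt_atTop (0:ℝ)] with p hp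
      have h1 : (1:ℝ) + p ≠ 0 := by linarith
      field_simp
    have hexp : Filter.Tendsto (fun p : ℝ => Real.exp (1 / p * Real.log (1 + p)))
        Filter.atTop (nhds 1) := by
      have := (Real.continuous_exp.tendsto 0).comp harg
      simpa [Function.comp_def] using this
    refine hexp.congr' ?_
    filter_upwards [Filter.eventually_gt_atTop (0:ℝ)] with p hp
    rw [Real.rpow_def_of_pos (by linarith), mul_comm]
  have base : Filter.Tendsto (fun p : ℝ => p / (1 + p) ^ (1 + 1 / p))
      Filter.atTop (nhds 1) := by
    have hinv := t2.inv₀ one_ne_zero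
    have hmul := t1.mul hinv
    rw [inv_one, mul_one] at hmul
    refine hmul.congr' ?_
    filter_upwards [Filter.eventually_gt_atTop (0:ℝ)] with p hp
    have h1p : (0:ℝ) < 1 + p := by linarith
    have hq : (1 + p) ^ ((1:ℝ) / p) ≠ 0 := (Real.rpow_pos_of_pos h1p _).ne'
    rw [Real.rpow_add h1p, Real.rpow_one]
    rw [div_mul_eq_div_div, div_eq_mul_inv (p / (1 + p))]
  have := base.pow n
  simpa using this



/-- `M(K) ≤ M_p(K)` for all `p ∈ (0,∞)`; if moreover `b(K) = 0`, then
`(p/(1+p)^{1+1/p})ⁿ·M_p(K) ≤ M(K)` for all `p ∈ (0,∞)`, and `M_p(K) → M(K)` as `p → ∞`. -/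
theorem mahler_le_mahlerVolE (n : ℕ) (hn : 1 ≤ n)
    (K : Set (EuclideanSpace ℝ (Fin n))) (hKc : IsCompact K) (hKconv : Convex ℝ K)
    (hKint : (interior K).Nonempty) :
    (∀ p : ℝ, 0 < p → mahlerME n K ≤ mahlerVolE n p K) ∧
    (baryK n K = 0 →
      (∀ p : ℝ, 0 < p →
        ENNReal.ofReal ((p / (1 + p) ^ (1 + 1 / p)) ^ n) * mahlerVolE n p K ≤ mahlerME n K) ∧
      Filter.Tendsto (fun p => mahlerVolE n p K) Filter.atTop (nhds (mahlerME n K))) := by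
  have hne : K.Nonempty := hKint.mono interior_subset
  refine ⟨fun p hp => part1_le hKc hKint hp, fun hbary => ?_⟩
  have hb : (∫ x in K, x) = 0 := by
    rw [baryK, smul_eq_zero] at hbary
    rcases hbary with h | h
    · exact absurd h (inv_ne_zero (volK_toReal_pos hKc hKint).ne')
    · exact h
  have h0 : (0 : EuclideanSpace ℝ (Fin n)) ∈ interior K := zero_mem_interior hKc hKconv hKint hb
  have hMfin : mahlerME n K ≠ ⊤ := mahlerME_ne_top hKc hne h0
  refine ⟨fun p hp => part2_le hKc hKconv hKint hb hp, ?_⟩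
  have hlow : ∀ᶠ p : ℝ in Filter.atTop, mahlerME n K ≤ mahlerVolE n p K := by
    filter_upwards [Filter.eventually_gt_atTop (0:ℝ)] with p hp
    exact part1_le hKc hKint hp
  have hup : ∀ᶠ p : ℝ in Filter.atTop, mahlerVolE n p K
      ≤ mahlerME n K / ENNReal.ofReal ((p / (1 + p) ^ (1 + 1 / p)) ^ n) := by
    filter_upwards [Filter.eventually_gt_atTop (0:ℝ)] with p hp
    have hcpos : 0 < (p / (1 + p) ^ (1 + 1 / p)) ^ n := by
      have h1p : (0:ℝ) < 1 + p := by linarith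
      positivity
    rw [ENNReal.le_div_iff_mul_le (Or.inl (ENNReal.ofReal_pos.2 hcpos).ne')
      (Or.inl ENNReal.ofReal_ne_top), mul_comm]
    exact part2_le hKc hKconv hKint hb hp
  have hdiv : Filter.Tendsto
      (fun p : ℝ => mahlerME n K / ENNReal.ofReal ((p / (1 + p) ^ (1 + 1 / p)) ^ n))
      Filter.atTop (nhds (mahlerME n K)) := by
    have h1 : Filter.Tendsto (fun p : ℝ => ENNReal.ofReal ((p / (1 + p) ^ (1 + 1 / p)) ^ n))
        Filter.atTop (nhds 1) := by
      have := ENNReal.tendsto_ofReal (tendsto_const_one n)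
      simpa using this
    have h2 : Filter.Tendsto (fun p : ℝ => (ENNReal.ofReal ((p / (1 + p) ^ (1 + 1 / p)) ^ n))⁻¹)
        Filter.atTop (nhds 1) := by
      have := ENNReal.tendsto_inv_iff.2 h1
      simpa using this
    have h3 := ENNReal.Tendsto.const_mul h2 (Or.inr hMfin)
    rw [mul_one] at h3
    refine h3.congr fun p => ?_
    rw [ENNReal.div_eq_inv_mul, mul_comm]
  exact tendsto_of_tendsto_of_tendsto_of_le_of_le' tendsto_const_nhds hdiv hlow hup

end
end

section
/- Let n ≥ 1, p ∈ (0,∞), let K ⊂ ℝⁿ be a convex body and x ∈ ℝⁿ. Then M_p(K − x) < ∞ if and only if x lies in the interior of K. -/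
open MeasureTheory
open scoped RealInnerProductSpace Pointwise ENNReal

noncomputable section

lemma pow_le_factorial_mul_exp (m : ℕ) {x : ℝ} (hx : 0 ≤ x) :
    x ^ m ≤ (m.factorial : ℝ) * Real.exp x := by
  have h2 : x ^ m / (m.factorial : ℝ) ≤ ∑ i ∈ Finset.range (m + 1), x ^ i / (i.factorial : ℝ) :=
    Finset.single_le_sum (f := fun i => x ^ i / (i.factorial : ℝ))
      (fun i _ => by positivity) (Finset.self_mem_range_succ m)
  have h3 : x ^ m / (m.factorial : ℝ) ≤ Real.exp x :=
    h2.trans (Real.sum_le_exp_of_nonneg hx (m + 1))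
  have hm : (0:ℝ) < (m.factorial : ℝ) := by positivity
  calc x ^ m = x ^ m / (m.factorial : ℝ) * (m.factorial : ℝ) := by field_simp
  _ ≤ Real.exp x * (m.factorial : ℝ) := mul_le_mul_of_nonneg_right h3 hm.le
  _ = (m.factorial : ℝ) * Real.exp x := mul_comm _ _

lemma integrable_exp_neg_norm (n : ℕ) {a : ℝ} (ha : 0 < a) :
    Integrable (fun y : EuclideanSpace ℝ (Fin n) => Real.exp (-(a * ‖y‖))) := by
  set m := n + 1 with hm
  have hnr : (Module.finrank ℝ (EuclideanSpace ℝ (Fin n)) : ℝ) < (m : ℝ) := by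
    rw [finrank_euclideanSpace_fin]; exact_mod_cast Nat.lt_succ_self n
  have hint := (integrable_one_add_norm (E := EuclideanSpace ℝ (Fin n)) (μ := volume)
    hnr).const_mul (Real.exp a * (m.factorial : ℝ) / a ^ m)
  refine hint.mono' ?_ ?_
  · exact (Real.continuous_exp.comp (continuous_const.mul continuous_norm).neg).aestronglyMeasurable
  · filter_upwards with y
    rw [Real.norm_eq_abs, abs_of_pos (Real.exp_pos _)]
    set t := ‖y‖ with htdef
    have ht : 0 ≤ t := norm_nonneg y
    have h1 : (0:ℝ) < 1 + t := by linarith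
    have hpow : (1 + t) ^ (-(m : ℝ)) = ((1 + t) ^ m)⁻¹ := by
      rw [← Real.rpow_natCast (1 + t) m, ← Real.rpow_neg h1.le]
    rw [hpow]
    have hap : (0:ℝ) < a ^ m := pow_pos ha m
    have key : (a * (1 + t)) ^ m ≤ (m.factorial : ℝ) * Real.exp (a * (1 + t)) :=
      pow_le_factorial_mul_exp m (mul_nonneg ha.le h1.le)
    have key2 : Real.exp (-(a * t)) * (1 + t) ^ m ≤ Real.exp a * (m.factorial : ℝ) / a ^ m := by
      rw [le_div_iff₀ hap]
      calc Real.exp (-(a * t)) * (1 + t) ^ m * a ^ m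
          = (a * (1 + t)) ^ m * Real.exp (-(a * t)) := by rw [mul_pow]; ring
        _ ≤ (m.factorial : ℝ) * Real.exp (a * (1 + t)) * Real.exp (-(a * t)) :=
            mul_le_mul_of_nonneg_right key (Real.exp_pos _).le
        _ = Real.exp a * (m.factorial : ℝ) := by
            rw [mul_assoc, ← Real.exp_add]
            have : a * (1 + t) + -(a * t) = a := by ring
            rw [this, mul_comm]
    have hppos : (0:ℝ) < (1 + t) ^ m := pow_pos h1 m
    calc Real.exp (-(a * t))
        = Real.exp (-(a * t)) * (1 + t) ^ m * ((1 + t) ^ m)⁻¹ := by field_simp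
      _ ≤ Real.exp a * (m.factorial : ℝ) / a ^ m * ((1 + t) ^ m)⁻¹ := by gcongr

lemma lintegral_exp_neg_hpSupp_lt_top (n : ℕ) {p : ℝ} (hp : 0 < p)
    {K : Set (EuclideanSpace ℝ (Fin n))} (hKc : IsCompact K) (h0 : 0 ∈ interior K) :
    ∫⁻ y, ENNReal.ofReal (Real.exp (-(hpSupp n p K y))) < ⊤ := by
  obtain ⟨ε, hε, hball⟩ := Metric.isOpen_iff.1 isOpen_interior 0 h0
  have hballK : Metric.ball (0 : EuclideanSpace ℝ (Fin n)) ε ⊆ K :=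
    hball.trans interior_subset
  set c₀ : ℝ := (volume (Metric.ball (0 : EuclideanSpace ℝ (Fin n)) (ε/4))).toReal with hc₀def
  have hc₀ : 0 < c₀ :=
    ENNReal.toReal_pos (Metric.measure_ball_pos volume _ (by linarith)).ne' measure_ball_lt_top.ne
  set V : ℝ := (volume K).toReal with hVdef
  have hV : 0 < V :=
    ENNReal.toReal_pos ((Metric.measure_ball_pos volume 0 hε).trans_le (measure_mono hballK)).ne'
      hKc.measure_lt_top.ne
  have hc₀V : c₀ ≤ V :=
    ENNReal.toReal_mono hKc.measure_lt_top.ne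
      (measure_mono ((Metric.ball_subset_ball (by linarith)).trans hballK))
  set C : ℝ := (1/p) * (Real.log c₀ - Real.log V) with hCdef
  have hbound : ∀ y, Real.exp (-(hpSupp n p K y)) ≤ Real.exp (-C) * Real.exp (-(ε/4 * ‖y‖)) := by
    intro y
    rcases eq_or_ne y 0 with rfl | hy0
    · have h00 : hpSupp n p K 0 = 0 := by
        simp only [hpSupp, inner_zero_right, mul_zero, Real.exp_zero]
        rw [setIntegral_const, smul_eq_mul, mul_one, measureReal_def, ← hVdef, div_self hV.ne', Real.log_one,
          mul_zero]
      rw [h00, neg_zero, Real.exp_zero, norm_zero, mul_zero, neg_zero, Real.exp_zero, mul_one]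
      apply Real.one_le_exp
      have hlog := Real.log_le_log hc₀ hc₀V
      have h1p : 0 ≤ 1/p := by positivity
      nlinarith
    · have hy : 0 < ‖y‖ := norm_pos_iff.2 hy0
      set c : EuclideanSpace ℝ (Fin n) := (ε/2/‖y‖) • y with hcdef
      have hcnorm : ‖c‖ = ε/2 := by
        rw [hcdef, norm_smul, Real.norm_eq_abs, abs_of_pos (by positivity),
          div_mul_cancel₀ _ hy.ne']
      have hsub : Metric.ball c (ε/4) ⊆ K := by
        intro z hz
        apply hballK
        rw [mem_ball_iff_norm] at hz
        rw [Metric.mem_ball, dist_zero_right]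
        calc ‖z‖ = ‖z - c + c‖ := by rw [sub_add_cancel]
          _ ≤ ‖z - c‖ + ‖c‖ := norm_add_le _ _
          _ < ε := by rw [hcnorm]; linarith
      have hinner : ∀ z ∈ Metric.ball c (ε/4), ε/4 * ‖y‖ ≤ ⟪z, y⟫ := by
        intro z hz
        rw [mem_ball_iff_norm] at hz
        have hzc : c + (z - c) = z := by abel
        have hdc : ⟪z, y⟫ = ⟪c, y⟫ + ⟪z - c, y⟫ := by rw [← inner_add_left, hzc]
        have hcy : ⟪c, y⟫ = ε/2 * ‖y‖ := by
          rw [hcdef, real_inner_smul_left, real_inner_self_eq_norm_sq]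
          field_simp
        have habs : |⟪z - c, y⟫| ≤ ε/4 * ‖y‖ := by
          calc |⟪z - c, y⟫| ≤ ‖z - c‖ * ‖y‖ := abs_real_inner_le_norm _ _
            _ ≤ ε/4 * ‖y‖ := mul_le_mul_of_nonneg_right hz.le (norm_nonneg _)
        have h2 := (abs_le.1 habs).1
        rw [hdc, hcy]
        linarith
      have hcont : Continuous fun z : EuclideanSpace ℝ (Fin n) => Real.exp (p * ⟪z, y⟫) :=
        Real.continuous_exp.comp (continuous_const.mul (continuous_id.inner continuous_const))
      have hIntK : IntegrableOn (fun z => Real.exp (p * ⟪z, y⟫)) K volume :=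
        hcont.continuousOn.integrableOn_compact hKc
      have hI1 : c₀ * Real.exp (p * (ε/4 * ‖y‖))
          ≤ ∫ z in Metric.ball c (ε/4), Real.exp (p * ⟪z, y⟫) := by
        have hmono := setIntegral_mono_on
          (integrableOn_const measure_ball_lt_top.ne)
          (hIntK.mono_set hsub) measurableSet_ball
          (fun z hz => Real.exp_le_exp.2 (mul_le_mul_of_nonneg_left (hinner z hz) hp.le))
        rwa [setIntegral_const, measureReal_def, Measure.addHaar_ball_center, smul_eq_mul, ← hc₀def] at hmono
      have hI2 : (∫ z in Metric.ball c (ε/4), Real.exp (p * ⟪z, y⟫))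
          ≤ ∫ z in K, Real.exp (p * ⟪z, y⟫) :=
        setIntegral_mono_set hIntK (ae_of_all _ fun z => (Real.exp_pos _).le)
          (HasSubset.Subset.eventuallyLE hsub)
      have hlog : Real.log (c₀ * Real.exp (p * (ε/4 * ‖y‖)) / V) ≤
          Real.log ((∫ z in K, Real.exp (p * ⟪z, y⟫)) / V) :=
        Real.log_le_log (by positivity) (by gcongr; exact hI1.trans hI2)
      have hlog2 : Real.log (c₀ * Real.exp (p * (ε/4 * ‖y‖)) / V)
          = Real.log c₀ + p * (ε/4 * ‖y‖) - Real.log V := by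
        rw [Real.log_div (by positivity) hV.ne', Real.log_mul hc₀.ne' (Real.exp_pos _).ne',
          Real.log_exp]
      have hfinal : C + ε/4 * ‖y‖ ≤ hpSupp n p K y := by
        have hmul := mul_le_mul_of_nonneg_left hlog (by positivity : (0:ℝ) ≤ 1/p)
        rw [hlog2] at hmul
        calc C + ε/4 * ‖y‖ = 1/p * (Real.log c₀ + p * (ε/4 * ‖y‖) - Real.log V) := by
              rw [hCdef]; field_simp; ring
          _ ≤ _ := hmul
      calc Real.exp (-(hpSupp n p K y)) ≤ Real.exp (-(C + ε/4 * ‖y‖)) :=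
            Real.exp_le_exp.2 (neg_le_neg hfinal)
        _ = Real.exp (-C) * Real.exp (-(ε/4 * ‖y‖)) := by rw [← Real.exp_add]; ring_nf
  have hint : Integrable (fun y : EuclideanSpace ℝ (Fin n) =>
      Real.exp (-C) * Real.exp (-(ε/4 * ‖y‖))) volume :=
    (integrable_exp_neg_norm n (by positivity : (0:ℝ) < ε/4)).const_mul _
  calc ∫⁻ y, ENNReal.ofReal (Real.exp (-(hpSupp n p K y)))
      ≤ ∫⁻ y, ENNReal.ofReal (Real.exp (-C) * Real.exp (-(ε/4 * ‖y‖))) :=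
        lintegral_mono fun y => ENNReal.ofReal_le_ofReal (hbound y)
    _ < ⊤ := hint.lintegral_lt_top

lemma lintegral_exp_neg_hpSupp_eq_top (n : ℕ) {p : ℝ} (hp : 0 < p)
    {K : Set (EuclideanSpace ℝ (Fin n))} (hKc : IsCompact K)
    (hV : 0 < (volume K).toReal)
    {u : EuclideanSpace ℝ (Fin n)} (hu : ‖u‖ = 1)
    (hsep : ∀ z ∈ K, ⟪z, u⟫ ≤ 0) :
    ∫⁻ y, ENNReal.ofReal (Real.exp (-(hpSupp n p K y))) = ⊤ := by
  set V : ℝ := (volume K).toReal with hVdef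
  obtain ⟨R₀, hR₀⟩ := hKc.isBounded.subset_closedBall 0
  set R := max R₀ 1 with hRdef
  have hR1 : (1:ℝ) ≤ R := le_max_right _ _
  have hR : 0 < R := lt_of_lt_of_le one_pos hR1
  have hKR : K ⊆ Metric.closedBall 0 R :=
    hR₀.trans (Metric.closedBall_subset_closedBall (le_max_left _ _))
  set S := {y : EuclideanSpace ℝ (Fin n) | 0 ≤ ⟪y, u⟫ ∧ ‖y - ⟪y, u⟫ • u‖ ≤ 1} with hSdef
  have hcont1 : Continuous fun y : EuclideanSpace ℝ (Fin n) => ⟪y, u⟫ :=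
    continuous_id.inner continuous_const
  have hcont2 : Continuous fun y : EuclideanSpace ℝ (Fin n) => ‖y - ⟪y, u⟫ • u‖ :=
    (continuous_id.sub (hcont1.smul continuous_const)).norm
  have hS_meas : MeasurableSet S := by
    have : S = {y : EuclideanSpace ℝ (Fin n) | 0 ≤ ⟪y, u⟫} ∩
        {y : EuclideanSpace ℝ (Fin n) | ‖y - ⟪y, u⟫ • u‖ ≤ 1} := rfl
    rw [this]
    exact ((isClosed_le continuous_const hcont1).measurableSet).inter
      ((isClosed_le hcont2 continuous_const).measurableSet)
  -- the `hpSupp` is bounded by `R` on `S`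
  have hh : ∀ y ∈ S, hpSupp n p K y ≤ R := by
    rintro y ⟨hy1, hy2⟩
    have hzb : ∀ z ∈ K, p * ⟪z, y⟫ ≤ p * R := by
      intro z hz
      have hdecomp : ⟪z, y⟫ = ⟪y, u⟫ * ⟪z, u⟫ + ⟪z, y - ⟪y, u⟫ • u⟫ := by
        rw [inner_sub_right, real_inner_smul_right]; ring
      have h1 : ⟪y, u⟫ * ⟪z, u⟫ ≤ 0 := mul_nonpos_of_nonneg_of_nonpos hy1 (hsep z hz)
      have hzR : ‖z‖ ≤ R := by simpa [Metric.mem_closedBall, dist_zero_right] using hKR hz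
      have h2 : ⟪z, y - ⟪y, u⟫ • u⟫ ≤ R := by
        calc ⟪z, y - ⟪y, u⟫ • u⟫ ≤ ‖z‖ * ‖y - ⟪y, u⟫ • u‖ := real_inner_le_norm _ _
          _ ≤ R * 1 := mul_le_mul hzR hy2 (norm_nonneg _) hR.le
          _ = R := mul_one R
      have : ⟪z, y⟫ ≤ R := by rw [hdecomp]; linarith
      exact mul_le_mul_of_nonneg_left this hp.le
    have hcont : Continuous fun z : EuclideanSpace ℝ (Fin n) => Real.exp (p * ⟪z, y⟫) :=
      Real.continuous_exp.comp (continuous_const.mul (continuous_id.inner continuous_const))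
    have hIntK : IntegrableOn (fun z => Real.exp (p * ⟪z, y⟫)) K volume :=
      hcont.continuousOn.integrableOn_compact hKc
    have hIle : (∫ z in K, Real.exp (p * ⟪z, y⟫)) ≤ V * Real.exp (p * R) := by
      have hmono := setIntegral_mono_on hIntK
        (integrableOn_const hKc.measure_lt_top.ne) hKc.measurableSet
        (fun z hz => Real.exp_le_exp.2 (hzb z hz))
      rwa [setIntegral_const, smul_eq_mul, measureReal_def, ← hVdef] at hmono
    have hInn : 0 ≤ ∫ z in K, Real.exp (p * ⟪z, y⟫) :=
      setIntegral_nonneg hKc.measurableSet fun z _ => (Real.exp_pos _).le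
    have harg : (∫ z in K, Real.exp (p * ⟪z, y⟫)) / V ≤ Real.exp (p * R) := by
      rw [div_le_iff₀ hV]
      calc (∫ z in K, Real.exp (p * ⟪z, y⟫)) ≤ V * Real.exp (p * R) := hIle
        _ = Real.exp (p * R) * V := mul_comm _ _
    have hlog : Real.log ((∫ z in K, Real.exp (p * ⟪z, y⟫)) / V) ≤ p * R := by
      rcases eq_or_lt_of_le (div_nonneg hInn hV.le) with h | h
      · rw [← h, Real.log_zero]; positivity
      · exact (Real.log_le_iff_le_exp h).2 harg
    calc hpSupp n p K y = 1/p * Real.log ((∫ z in K, Real.exp (p * ⟪z, y⟫)) / V) := rfl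
      _ ≤ 1/p * (p * R) := mul_le_mul_of_nonneg_left hlog (by positivity)
      _ = R := by field_simp
  -- `S` has infinite volume
  have hball_sub : ∀ k : ℕ, Metric.ball (((k : ℝ) + 1) • u) (1/2) ⊆ S := by
    intro k y hy
    rw [mem_ball_iff_norm] at hy
    obtain ⟨w, rfl⟩ : ∃ w, y = w + ((k : ℝ) + 1) • u := ⟨y - ((k : ℝ) + 1) • u, by abel⟩
    have hwn : ‖w‖ < 1/2 := by simpa using hy
    have hiu : ⟪w + ((k : ℝ) + 1) • u, u⟫ = ⟪w, u⟫ + ((k : ℝ) + 1) := by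
      rw [inner_add_left, real_inner_smul_left, real_inner_self_eq_norm_sq, hu]
      ring
    have hwu : |⟪w, u⟫| ≤ ‖w‖ := by simpa [hu] using abs_real_inner_le_norm w u
    have hwu1 := (abs_le.1 hwu).1
    have hwu2 := (abs_le.1 hwu).2
    have hk : (0:ℝ) ≤ (k : ℝ) := Nat.cast_nonneg k
    constructor
    · rw [hiu]; linarith
    · have heq : (w + ((k : ℝ) + 1) • u) - ⟪w + ((k : ℝ) + 1) • u, u⟫ • u
          = w - ⟪w, u⟫ • u := by
        rw [hiu]; module
      rw [heq]
      calc ‖w - ⟪w, u⟫ • u‖ ≤ ‖w‖ + ‖⟪w, u⟫ • u‖ := norm_sub_le _ _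
        _ = ‖w‖ + |⟪w, u⟫| := by rw [norm_smul, hu, mul_one, Real.norm_eq_abs]
        _ ≤ 1 := by linarith
  have hdisj : Pairwise (Function.onFun Disjoint
      fun k : ℕ => Metric.ball (((k : ℝ) + 1) • u) (1/2)) := by
    intro i j hij
    apply Metric.ball_disjoint_ball
    rw [dist_eq_norm, ← sub_smul, norm_smul, hu, mul_one]
    have heq : ((i : ℝ) + 1) - ((j : ℝ) + 1) = ((i : ℤ) - (j : ℤ) : ℤ) := by push_cast; ring
    rw [heq, Real.norm_eq_abs, ← Int.cast_abs]
    have h1 : (1:ℤ) ≤ |(i : ℤ) - (j : ℤ)| :=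
      Int.one_le_abs (sub_ne_zero.2 (by exact_mod_cast hij))
    have : (1:ℝ) ≤ |(i : ℤ) - (j : ℤ)| := by exact_mod_cast h1
    linarith
  have hvolS : volume S = ⊤ := by
    have hUnion : volume (⋃ k : ℕ, Metric.ball (((k : ℝ) + 1) • u) (1/2)) = ⊤ := by
      rw [measure_iUnion hdisj fun k => measurableSet_ball]
      have hconst : ∀ k : ℕ, volume (Metric.ball (((k : ℝ) + 1) • u) (1/2))
          = volume (Metric.ball (0 : EuclideanSpace ℝ (Fin n)) (1/2)) := fun k =>
        Measure.addHaar_ball_center volume _ _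
      rw [tsum_congr hconst]
      exact ENNReal.tsum_const_eq_top_of_ne_zero
        (Metric.measure_ball_pos volume _ (by norm_num)).ne'
    exact top_le_iff.1 (hUnion ▸ measure_mono (Set.iUnion_subset hball_sub))
  have hmain : ENNReal.ofReal (Real.exp (-R)) * volume S
      ≤ ∫⁻ y, ENNReal.ofReal (Real.exp (-(hpSupp n p K y))) := by
    calc ENNReal.ofReal (Real.exp (-R)) * volume S
        = ∫⁻ _ in S, ENNReal.ofReal (Real.exp (-R)) := (setLIntegral_const S _).symm
      _ ≤ ∫⁻ y in S, ENNReal.ofReal (Real.exp (-(hpSupp n p K y))) :=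
          setLIntegral_mono_ae' hS_meas (ae_of_all _ fun y hy =>
            ENNReal.ofReal_le_ofReal (Real.exp_le_exp.2 (neg_le_neg (hh y hy))))
      _ ≤ ∫⁻ y, ENNReal.ofReal (Real.exp (-(hpSupp n p K y))) :=
          setLIntegral_le_lintegral _ _
  rw [hvolS, ENNReal.mul_top (by simp [Real.exp_pos])] at hmain
  exact top_le_iff.1 hmain

/-- For a convex body `K ⊂ ℝⁿ` and `x ∈ ℝⁿ`, `M_p(K − x) < ∞` if and only if
`x` lies in the interior of `K`. -/
theorem mahlerVolE_finite_iff (n : ℕ) (hn : 1 ≤ n) (p : ℝ) (hp : 0 < p)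
    (K : Set (EuclideanSpace ℝ (Fin n))) (hKc : IsCompact K) (hKconv : Convex ℝ K)
    (hKint : (interior K).Nonempty) (x : EuclideanSpace ℝ (Fin n)) :
    mahlerVolE n p (transl n K x) < ⊤ ↔ x ∈ interior K := by
  have hKc' : IsCompact (transl n K x) :=
    hKc.image (continuous_id.sub continuous_const)
  have hint_eq : interior (transl n K x) = (fun z => z - x) '' interior K := by
    have h := (Homeomorph.subRight x).image_interior K
    simpa [transl, Homeomorph.subRight] using h.symm
  have hmem : (0 : EuclideanSpace ℝ (Fin n)) ∈ interior (transl n K x) ↔ x ∈ interior K := by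
    rw [hint_eq]
    constructor
    · rintro ⟨z, hz, hzx⟩
      rwa [← sub_eq_zero.1 hzx]
    · intro hx
      exact ⟨x, hx, sub_self x⟩
  constructor
  · intro hfin
    by_contra hx
    obtain ⟨f, hf⟩ :=
      geometric_hahn_banach_open_point hKconv.interior isOpen_interior hx
    obtain ⟨a, ha⟩ := hKint
    have hfK : ∀ z ∈ K, f z ≤ f x := by
      intro z hz
      have hcont : Continuous fun t : ℝ => f (z + t • (a - z)) :=
        f.continuous.comp (continuous_const.add (continuous_id.smul continuous_const))
      have h0 : f (z + (0:ℝ) • (a - z)) = f z := by simp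
      have htend : Filter.Tendsto (fun t : ℝ => f (z + t • (a - z)))
          (nhdsWithin 0 (Set.Ioi 0)) (nhds (f z)) :=
        h0 ▸ (hcont.tendsto 0).mono_left nhdsWithin_le_nhds
      refine le_of_tendsto htend ?_
      filter_upwards [Ioc_mem_nhdsGT_of_mem (Set.left_mem_Ico.2 one_pos)] with t ht
      exact (hf _ (hKconv.add_smul_sub_mem_interior hz ha ht)).le
    set u₀ := (InnerProductSpace.toDual ℝ (EuclideanSpace ℝ (Fin n))).symm f with hu₀def
    have hu₀_apply : ∀ w, ⟪u₀, w⟫ = f w := fun w => InnerProductSpace.toDual_symm_apply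
    have hu₀ : u₀ ≠ 0 := by
      intro h
      have h2 : f a = 0 := by rw [← hu₀_apply a, h, inner_zero_left]
      have h3 : f x = 0 := by rw [← hu₀_apply x, h, inner_zero_left]
      have := hf a ha
      rw [h2, h3] at this
      exact lt_irrefl _ this
    set u := ‖u₀‖⁻¹ • u₀ with hudef
    have hu : ‖u‖ = 1 := norm_smul_inv_norm hu₀
    have hsep : ∀ w ∈ transl n K x, ⟪w, u⟫ ≤ 0 := by
      rintro w ⟨z, hz, rfl⟩
      have h1 : ⟪z - x, u₀⟫ ≤ 0 := by
        rw [real_inner_comm, hu₀_apply, map_sub]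
        linarith [hfK z hz]
      calc ⟪z - x, u⟫ = ‖u₀‖⁻¹ * ⟪z - x, u₀⟫ := real_inner_smul_right _ _ _
        _ ≤ 0 := mul_nonpos_of_nonneg_of_nonpos (by positivity) h1
    have hVpos : 0 < (volume (transl n K x)).toReal := by
      have hne : (interior (transl n K x)).Nonempty := by
        rw [hint_eq]; exact ⟨a - x, a, ha, rfl⟩
      refine ENNReal.toReal_pos ?_ hKc'.measure_lt_top.ne
      exact ((isOpen_interior.measure_pos volume hne).trans_le
        (measure_mono interior_subset)).ne'
    have htop := lintegral_exp_neg_hpSupp_eq_top n hp hKc' hVpos hu hsep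
    rw [mahlerVolE, htop, ENNReal.mul_top
      ((ENNReal.toReal_pos_iff.1 hVpos).1.ne')] at hfin
    exact absurd hfin (lt_irrefl ⊤)
  · intro hx
    rw [mahlerVolE]
    exact ENNReal.mul_lt_top hKc'.measure_lt_top
      (lintegral_exp_neg_hpSupp_lt_top n hp hKc' (hmem.2 hx))

end
end
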